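/- arXiv:2104.08302 — 6 statements merged into one kernel-verified Lean document; each statement's English description precedes it below -/
import Mathlib

section
/- If W is a real random variable such that E[f'(W) - W·f(W)] = 0 for every absolutely continuous f : ℝ → ℝ with E|f'(Z)| < ∞ (Z standard normal), then W has the standard normal distribution. -/
/-!
For a bounded `h` with `∫ h dγ = 0` (`γ` standard normal, density `φ`), the function
`f x = (∫_{-∞}^x h φ) / φ x` solves the Stein equation `f' x - x f x = h x`, and since
`∫_x^∞ t φ t dt = φ x` the product `x f x` is bounded by `sup |h|`. So `f` is an admissible test
function, and the hypothesis yields `E h(W) = 0`. Taking `h = 1_{(-∞, z]} - γ (-∞, z]` gives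
`P (W ≤ z) = γ (-∞, z]` for every `z`.
-/

open MeasureTheory ProbabilityTheory Real Set Filter Topology

namespace Stein

local notation "φ" => gaussianPDFReal 0 1

lemma gaussianPDFReal_zero_one_eq (t : ℝ) : φ t = (√(2 * π))⁻¹ * exp (-(1 / 2) * t ^ 2) := by
  simp only [gaussianPDFReal, NNReal.coe_one, mul_one, sub_zero]
  ring_nf

lemma hasDerivAt_gaussianPDFReal_zero_one (x : ℝ) : HasDerivAt φ (-x * φ x) x := by
  have h := (((hasDerivAt_pow 2 x).const_mul (-(1 / 2 : ℝ))).exp).const_mul (√(2 * π))⁻¹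
  rw [funext gaussianPDFReal_zero_one_eq]
  refine h.congr_deriv ?_
  push_cast; ring

lemma integrable_mul_gaussianPDFReal_zero_one : Integrable fun t ↦ t * φ t := by
  simp_rw [gaussianPDFReal_zero_one_eq, mul_left_comm _ (√(2 * π))⁻¹]
  exact (integrable_mul_exp_neg_mul_sq (by norm_num)).const_mul _

lemma integrable_neg_mul_gaussianPDFReal_zero_one : Integrable fun t ↦ -t * φ t := by
  simpa only [neg_mul] using integrable_mul_gaussianPDFReal_zero_one.fun_neg

lemma integral_Iic_neg_mul_gaussianPDFReal_zero_one (x : ℝ) : ∫ t in Iic x, -t * φ t = φ x := by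
  have hlim : Tendsto φ atBot (𝓝 0) :=
    tendsto_zero_of_hasDerivAt_of_integrableOn_Iic (a := 0)
      (fun t _ ↦ hasDerivAt_gaussianPDFReal_zero_one t)
      integrable_neg_mul_gaussianPDFReal_zero_one.integrableOn
      (integrable_gaussianPDFReal 0 1).integrableOn
  simpa using integral_Iic_of_hasDerivAt_of_tendsto'
    (fun t _ ↦ hasDerivAt_gaussianPDFReal_zero_one t)
    integrable_neg_mul_gaussianPDFReal_zero_one.integrableOn hlim

lemma integral_Ioi_mul_gaussianPDFReal_zero_one (x : ℝ) : ∫ t in Ioi x, t * φ t = φ x := by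
  have hderiv (t : ℝ) : HasDerivAt (fun u ↦ -φ u) (t * φ t) t := by
    simpa using (hasDerivAt_gaussianPDFReal_zero_one t).fun_neg
  have hlim : Tendsto (fun u ↦ -φ u) atTop (𝓝 0) :=
    tendsto_zero_of_hasDerivAt_of_integrableOn_Ioi (a := 0) (fun t _ ↦ hderiv t)
      integrable_mul_gaussianPDFReal_zero_one.integrableOn
      (integrable_gaussianPDFReal 0 1).neg.integrableOn
  simpa using integral_Ioi_of_hasDerivAt_of_tendsto' (fun t _ ↦ hderiv t)
    integrable_mul_gaussianPDFReal_zero_one.integrableOn hlim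

section Primitive

variable {E : Type*} [NormedAddCommGroup E] [NormedSpace ℝ E] {f : ℝ → E}

lemma integral_Iic_eq_add_intervalIntegral (hf : Integrable f) (x : ℝ) :
    ∫ t in Iic x, f t = (∫ t in Iic 0, f t) + ∫ t in 0..x, f t := by
  rw [← intervalIntegral.integral_Iic_sub_Iic hf.integrableOn hf.integrableOn, add_sub_cancel]

lemma continuous_integral_Iic [CompleteSpace E] (hf : Integrable f) :
    Continuous fun x ↦ ∫ t in Iic x, f t := by
  rw [funext (integral_Iic_eq_add_intervalIntegral hf)]
  exact continuous_const.add
    (intervalIntegral.continuous_primitive (fun _ _ ↦ hf.intervalIntegrable) 0)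

lemma hasDerivAt_integral_Iic [CompleteSpace E] (hf : Integrable f) {x : ℝ}
    (hx : ContinuousAt f x) : HasDerivAt (fun u ↦ ∫ t in Iic u, f t) (f x) x := by
  rw [funext (integral_Iic_eq_add_intervalIntegral hf)]
  exact (intervalIntegral.integral_hasDerivAt_right hf.intervalIntegrable
    hf.aestronglyMeasurable.stronglyMeasurableAtFilter hx).const_add _

end Primitive

lemma continuous_gaussianPDFReal_zero_one : Continuous φ :=
  continuous_iff_continuousAt.2 fun x ↦ (hasDerivAt_gaussianPDFReal_zero_one x).continuousAt

noncomputable def steinSolution (h : ℝ → ℝ) (x : ℝ) : ℝ := (∫ t in Iic x, h t * φ t) / φ x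

section SteinSolution

variable {h : ℝ → ℝ} {C : ℝ}

lemma integrable_mul_gaussianPDFReal_of_abs_le (hm : Measurable h) (hC : ∀ t, |h t| ≤ C) :
    Integrable fun t ↦ h t * φ t :=
  (integrable_gaussianPDFReal 0 1).bdd_mul hm.aestronglyMeasurable (ae_of_all _ hC)

lemma abs_mul_setIntegral_mul_gaussianPDFReal_le {x : ℝ} {s : Set ℝ} {g : ℝ → ℝ}
    (hs : MeasurableSet s) (hg : IntegrableOn (fun t ↦ g t * φ t) s) (hxg : ∀ t ∈ s, |x| ≤ g t)
    (hC : ∀ t, |h t| ≤ C) :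
    |x * ∫ t in s, h t * φ t| ≤ C * ∫ t in s, g t * φ t := by
  rw [← integral_const_mul x, ← integral_const_mul C, ← Real.norm_eq_abs]
  refine norm_integral_le_of_norm_le (hg.const_mul C) ?_
  filter_upwards [ae_restrict_mem hs] with t ht
  have hφ := gaussianPDFReal_nonneg 0 1 t
  calc ‖x * (h t * φ t)‖ = |h t| * (|x| * φ t) := by
        rw [Real.norm_eq_abs, abs_mul, abs_mul, abs_of_nonneg hφ]; ring
    _ ≤ C * (g t * φ t) :=
        mul_le_mul (hC t) (by gcongr; exact hxg t ht) (by positivity) ((abs_nonneg _).trans (hC t))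

lemma abs_mul_integral_Iic_mul_gaussianPDFReal_le (hm : Measurable h) (hC : ∀ t, |h t| ≤ C)
    (hmean : ∫ t, h t * φ t = 0) (x : ℝ) : |x * ∫ t in Iic x, h t * φ t| ≤ C * φ x := by
  rcases le_total x 0 with hx | hx
  · rw [← integral_Iic_neg_mul_gaussianPDFReal_zero_one x]
    refine abs_mul_setIntegral_mul_gaussianPDFReal_le measurableSet_Iic
      integrable_neg_mul_gaussianPDFReal_zero_one.integrableOn (fun t ht ↦ ?_) hC
    rw [abs_of_nonpos hx]
    exact neg_le_neg ht
  · -- for `x ≥ 0`, the mean-zero condition trades the left tail for the right one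
    have hint := integrable_mul_gaussianPDFReal_of_abs_le hm hC
    have hsplit :=
      intervalIntegral.integral_Iic_add_Ioi (b := x) hint.integrableOn hint.integrableOn
    rw [hmean, add_eq_zero_iff_eq_neg] at hsplit
    rw [hsplit, mul_neg, abs_neg, ← integral_Ioi_mul_gaussianPDFReal_zero_one x]
    refine abs_mul_setIntegral_mul_gaussianPDFReal_le measurableSet_Ioi
      integrable_mul_gaussianPDFReal_zero_one.integrableOn (fun t ht ↦ ?_) hC
    rw [abs_of_nonneg hx]
    exact le_of_lt ht

lemma abs_mul_steinSolution_le (hm : Measurable h) (hC : ∀ t, |h t| ≤ C)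
    (hmean : ∫ t, h t * φ t = 0) (x : ℝ) : |x * steinSolution h x| ≤ C := by
  have hφ := gaussianPDFReal_pos 0 1 x one_ne_zero
  rw [steinSolution, mul_div_assoc', abs_div, abs_of_pos hφ, div_le_iff₀ hφ]
  exact abs_mul_integral_Iic_mul_gaussianPDFReal_le hm hC hmean x

lemma abs_steinSolution_deriv_le (hm : Measurable h) (hC : ∀ t, |h t| ≤ C)
    (hmean : ∫ t, h t * φ t = 0) (x : ℝ) : |x * steinSolution h x + h x| ≤ 2 * C := by
  linarith [abs_add_le (x * steinSolution h x) (h x), abs_mul_steinSolution_le hm hC hmean x, hC x]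

lemma continuous_steinSolution (hm : Measurable h) (hC : ∀ t, |h t| ≤ C) :
    Continuous (steinSolution h) :=
  (continuous_integral_Iic (integrable_mul_gaussianPDFReal_of_abs_le hm hC)).div
    continuous_gaussianPDFReal_zero_one fun x ↦ (gaussianPDFReal_pos 0 1 x one_ne_zero).ne'

lemma measurable_steinSolution_deriv (hm : Measurable h) (hC : ∀ t, |h t| ≤ C) :
    Measurable fun x ↦ x * steinSolution h x + h x :=
  (measurable_id.mul (continuous_steinSolution hm hC).measurable).add hm

lemma hasDerivAt_steinSolution (hm : Measurable h) (hC : ∀ t, |h t| ≤ C) {x : ℝ}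
    (hx : ContinuousAt h x) :
    HasDerivAt (steinSolution h) (x * steinSolution h x + h x) x := by
  have hφ := (gaussianPDFReal_pos 0 1 x one_ne_zero).ne'
  refine ((hasDerivAt_integral_Iic (integrable_mul_gaussianPDFReal_of_abs_le hm hC)
    (hx.mul continuous_gaussianPDFReal_zero_one.continuousAt)).div
    (hasDerivAt_gaussianPDFReal_zero_one x) hφ).congr_deriv ?_
  rw [steinSolution]
  field_simp
  ring

lemma steinSolution_sub_eq_integral (hm : Measurable h) (hC : ∀ t, |h t| ≤ C)
    (hmean : ∫ t, h t * φ t = 0) {s : Set ℝ} (hs : s.Countable)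
    (hcont : ∀ x ∉ s, ContinuousAt h x) (a b : ℝ) :
    steinSolution h b - steinSolution h a = ∫ t in a..b, t * steinSolution h t + h t := by
  have hint : IntervalIntegrable (fun t ↦ t * steinSolution h t + h t) volume a b := by
    refine (intervalIntegrable_const (c := 2 * C)).mono_fun
      (measurable_steinSolution_deriv hm hC).aestronglyMeasurable (ae_of_all _ fun t ↦ ?_)
    simpa [Real.norm_eq_abs, abs_of_nonneg ((abs_nonneg _).trans (hC 0))]
      using abs_steinSolution_deriv_le hm hC hmean t
  exact (integral_eq_of_hasDerivAt_off_countable _ _ hs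
    (continuous_steinSolution hm hC).continuousOn
    (fun x hx ↦ hasDerivAt_steinSolution hm hC (hcont x hx.2)) hint).symm

end SteinSolution

def SatisfiesSteinIdentity {Ω : Type*} [MeasurableSpace Ω] (P : Measure Ω) (W : Ω → ℝ) : Prop :=
  ∀ f f' : ℝ → ℝ, Measurable f' →
    (∀ a b : ℝ, f b - f a = ∫ t in a..b, f' t) →
    Integrable f' (gaussianReal 0 1) →
    Integrable (fun ω ↦ f' (W ω)) P →
    Integrable (fun ω ↦ W ω * f (W ω)) P →
    ∫ ω, (f' (W ω) - W ω * f (W ω)) ∂P = 0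

lemma integral_comp_eq_zero_of_satisfiesSteinIdentity {Ω : Type*} [MeasurableSpace Ω]
    {P : Measure Ω} [IsFiniteMeasure P] {W : Ω → ℝ} (hW : SatisfiesSteinIdentity P W)
    (hWm : Measurable W) {h : ℝ → ℝ} {C : ℝ} (hm : Measurable h) (hC : ∀ t, |h t| ≤ C)
    (hmean : ∫ t, h t ∂gaussianReal 0 1 = 0) {s : Set ℝ} (hs : s.Countable)
    (hcont : ∀ x ∉ s, ContinuousAt h x) :
    ∫ ω, h (W ω) ∂P = 0 := by
  have hmean' : ∫ t, h t * φ t = 0 := by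
    rw [integral_gaussianReal_eq_integral_smul one_ne_zero] at hmean
    simpa only [smul_eq_mul, mul_comm] using hmean
  have hf' := measurable_steinSolution_deriv hm hC
  have hf'_bdd (x : ℝ) : ‖x * steinSolution h x + h x‖ ≤ 2 * C :=
    abs_steinSolution_deriv_le hm hC hmean' x
  have hW_bdd (ω : Ω) : ‖W ω * steinSolution h (W ω)‖ ≤ C :=
    abs_mul_steinSolution_le hm hC hmean' (W ω)
  have key := hW (steinSolution h) _ hf' (steinSolution_sub_eq_integral hm hC hmean' hs hcont)
    (.of_bound hf'.aestronglyMeasurable _ (ae_of_all _ hf'_bdd))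
    (.of_bound (hf'.comp hWm).aestronglyMeasurable _ (ae_of_all _ fun ω ↦ hf'_bdd (W ω)))
    (.of_bound (hWm.mul ((continuous_steinSolution hm hC).measurable.comp hWm)).aestronglyMeasurable
      _ (ae_of_all _ hW_bdd))
  simpa only [add_sub_cancel_left] using key

lemma continuousAt_indicator_Iic_one {z x : ℝ} (hx : x ≠ z) :
    ContinuousAt ((Iic z).indicator (1 : ℝ → ℝ)) x := by
  rcases hx.lt_or_gt with hxz | hzx
  · exact continuousAt_const.congr (eventually_of_mem (Iio_mem_nhds hxz)
      fun t ht ↦ (indicator_of_mem (mem_Iic.2 (le_of_lt ht)) (1 : ℝ → ℝ)).symm)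
  · exact continuousAt_const.congr (eventually_of_mem (Ioi_mem_nhds hzx)
      fun t ht ↦ (indicator_of_notMem (notMem_Iic.2 ht) (1 : ℝ → ℝ)).symm)

lemma integral_indicator_Iic_one_sub (μ : Measure ℝ) [IsProbabilityMeasure μ] (z c : ℝ) :
    ∫ t, ((Iic z).indicator (1 : ℝ → ℝ) t - c) ∂μ = μ.real (Iic z) - c := by
  have hint : Integrable ((Iic z).indicator (1 : ℝ → ℝ)) μ :=
    (integrable_const 1).indicator measurableSet_Iic
  rw [integral_sub hint (integrable_const c), integral_indicator_one measurableSet_Iic,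
    integral_const, probReal_univ, one_smul]

lemma map_apply_Iic_of_satisfiesSteinIdentity {Ω : Type*} [MeasurableSpace Ω]
    {P : Measure Ω} [IsProbabilityMeasure P] {W : Ω → ℝ} (hW : SatisfiesSteinIdentity P W)
    (hWm : Measurable W) (z : ℝ) : P.map W (Iic z) = gaussianReal 0 1 (Iic z) := by
  have : IsProbabilityMeasure (P.map W) := Measure.isProbabilityMeasure_map hWm.aemeasurable
  set c := (gaussianReal 0 1).real (Iic z)
  have hc₀ : 0 ≤ c := measureReal_nonneg
  have hc₁ : c ≤ 1 := measureReal_le_one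
  have hm : Measurable fun t ↦ (Iic z).indicator 1 t - c :=
    (measurable_one.indicator measurableSet_Iic).sub measurable_const
  have hbdd (t : ℝ) : |(Iic z).indicator 1 t - c| ≤ 1 := by
    by_cases ht : t ∈ Iic z
    · rw [indicator_of_mem ht, Pi.one_apply, abs_le]; constructor <;> linarith
    · rw [indicator_of_notMem ht, abs_le]; constructor <;> linarith
  have hmean : ∫ t, ((Iic z).indicator 1 t - c) ∂gaussianReal 0 1 = 0 := by
    rw [integral_indicator_Iic_one_sub, sub_self]
  have hzero := integral_comp_eq_zero_of_satisfiesSteinIdentity hW hWm hm hbdd hmean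
    (countable_singleton z) fun x hx ↦ (continuousAt_indicator_Iic_one hx).sub continuousAt_const
  rw [← integral_map hWm.aemeasurable hm.aestronglyMeasurable, integral_indicator_Iic_one_sub,
    sub_eq_zero, measureReal_eq_measureReal_iff] at hzero
  exact hzero

end Stein

/-- Stein's lemma (sufficiency): if `E[f'(W) - W f(W)] = 0` for every absolutely
continuous `f` with a.e. derivative `f'` satisfying `E|f'(Z)| < ∞` (for which the
expectations exist), then `W` is standard normal. -/
theorem stein_characterization_normal
    {Ω : Type*} [MeasureSpace Ω] [IsProbabilityMeasure (ℙ : Measure Ω)]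
    (W : Ω → ℝ) (hWmeas : Measurable W)
    (h : ∀ f f' : ℝ → ℝ, Measurable f' →
      (∀ a b : ℝ, f b - f a = ∫ t in a..b, f' t) →
      Integrable f' (gaussianReal 0 1) →
      Integrable (fun ω => f' (W ω)) ℙ →
      Integrable (fun ω => W ω * f (W ω)) ℙ →
      ∫ ω, (f' (W ω) - W ω * f (W ω)) ∂ℙ = 0) :
    Measure.map W ℙ = gaussianReal 0 1 := by
  exact Measure.ext_of_Iic _ _ (Stein.map_apply_Iic_of_satisfiesSteinIdentity h hWmeas)
end

section
/- For fixed x ∈ ℝ, the function f_x defined as the unique bounded solution of f'(w) - w·f(w) = 1_{w ≤ x} - Φ(x) satisfies ‖f_x‖_∞ ≤ 1 and ‖f_x'‖_∞ ≤ 1, where Φ is the standard normal CDF. -/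
/-!
Write `m(w) = e^{w²/2} ∫_w^∞ e^{-t²/2} dt = (1 - Φ w) / φ w` for the Mills ratio. Splitting the
integral at `x` gives `f_x(w) = (1 - Φ x) m(-w)` for `w ≤ x` and `f_x(w) = Φ x · m(w)` for `w > x`,
and monotonicity of `Φ` lets us replace `x` by `w`. Both bounds then reduce to two facts about `m`:
`w m(w) ≤ 1`, obtained by comparing `m(w) = ∫_0^∞ e^{-ws - s²/2} ds` with `∫_0^∞ e^{-ws} ds`, and
`Φ(w) m(w) = (1 - Φ w) m(-w) ≤ 1`.
-/

open MeasureTheory ProbabilityTheory Real Set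

noncomputable def millsRatio (w : ℝ) : ℝ :=
  exp (w ^ 2 / 2) * ∫ t in Ioi w, exp (-t ^ 2 / 2)

lemma millsRatio_nonneg (w : ℝ) : 0 ≤ millsRatio w :=
  mul_nonneg (exp_pos _).le (setIntegral_nonneg measurableSet_Ioi fun _ _ => (exp_pos _).le)

lemma integrable_exp_neg_mul_sub_sq_half (w : ℝ) :
    Integrable fun s : ℝ => exp (-(w * s) - s ^ 2 / 2) := by
  have h := ((integrable_exp_neg_mul_sq (one_half_pos (α := ℝ))).comp_add_right w).const_mul
    (exp (w ^ 2 / 2))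
  refine h.congr (ae_of_all _ fun s => ?_)
  simp only [← exp_add]
  ring_nf

lemma millsRatio_eq_integral (w : ℝ) :
    millsRatio w = ∫ s in Ioi 0, exp (-(w * s) - s ^ 2 / 2) := by
  have h := (measurePreserving_add_right volume w).setIntegral_preimage_emb
    (measurableEmbedding_addRight w) (fun t => exp (w ^ 2 / 2) * exp (-t ^ 2 / 2)) (Ioi w)
  rw [preimage_add_const_Ioi, sub_self] at h
  rw [millsRatio, ← integral_const_mul, ← h]
  refine setIntegral_congr_fun measurableSet_Ioi fun s _ => ?_
  simp only [← exp_add]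
  ring_nf

lemma mul_millsRatio_le_one (w : ℝ) : w * millsRatio w ≤ 1 := by
  rcases le_or_gt w 0 with hw | hw
  · linarith [mul_nonpos_of_nonpos_of_nonneg hw (millsRatio_nonneg w)]
  have hlaplace : ∫ s in Ioi (0 : ℝ), exp (-w * s) = 1 / w := by
    rw [integral_exp_mul_Ioi (by linarith), mul_zero, exp_zero]
    field_simp
  have hle : millsRatio w ≤ 1 / w := by
    rw [millsRatio_eq_integral, ← hlaplace]
    refine setIntegral_mono_on (integrable_exp_neg_mul_sub_sq_half w).integrableOn
      (integrableOn_exp_mul_Ioi (by linarith) 0) measurableSet_Ioi fun s _ => ?_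
    exact exp_le_exp.2 (by nlinarith [sq_nonneg s])
  calc w * millsRatio w ≤ w * (1 / w) := by gcongr
    _ = 1 := by field_simp

lemma millsRatio_le_of_nonneg {w : ℝ} (hw : 0 ≤ w) : millsRatio w ≤ √(2 * π) / 2 := by
  have hgauss : ∫ s in Ioi (0 : ℝ), exp (-(1 / 2) * s ^ 2) = √(2 * π) / 2 := by
    rw [integral_gaussian_Ioi, div_div_eq_mul_div, div_one, mul_comm]
  rw [millsRatio_eq_integral, ← hgauss]
  refine setIntegral_mono_on (integrable_exp_neg_mul_sub_sq_half w).integrableOn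
    (integrable_exp_neg_mul_sq one_half_pos).integrableOn measurableSet_Ioi fun s hs => ?_
  exact exp_le_exp.2 (by nlinarith [mul_nonneg hw (le_of_lt hs)])

lemma gaussianReal_real_eq_integral (s : Set ℝ) :
    (gaussianReal 0 1).real s = (∫ t in s, exp (-t ^ 2 / 2)) / √(2 * π) := by
  rw [measureReal_def, gaussianReal_apply_eq_integral 0 one_ne_zero,
    ENNReal.toReal_ofReal (integral_nonneg fun t => gaussianPDFReal_nonneg 0 1 t),
    div_eq_inv_mul, ← integral_const_mul]
  congr 1 with t
  simp [gaussianPDFReal]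

lemma millsRatio_eq_gaussian_cdf (w : ℝ) :
    millsRatio w = √(2 * π) * exp (w ^ 2 / 2) * (1 - cdf (gaussianReal 0 1) w) := by
  have htail := measureReal_compl (μ := gaussianReal 0 1) (measurableSet_Iic (a := w))
  rw [compl_Iic, probReal_univ, gaussianReal_real_eq_integral] at htail
  rw [cdf_eq_real, ← htail, millsRatio]
  field_simp

lemma millsRatio_neg_eq_gaussian_cdf (w : ℝ) :
    millsRatio (-w) = √(2 * π) * exp (w ^ 2 / 2) * cdf (gaussianReal 0 1) w := by
  have hsymm := integral_comp_neg_Ioi (-w) fun t => exp (-t ^ 2 / 2)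
  simp only [neg_neg, neg_sq] at hsymm
  rw [cdf_eq_real, gaussianReal_real_eq_integral, millsRatio, neg_sq, ← hsymm]
  field_simp

lemma exp_sq_half_le_two {w : ℝ} (hw : |w| ≤ 1) : exp (w ^ 2 / 2) ≤ 2 := by
  have hsq : w ^ 2 ≤ 1 := by nlinarith [sq_abs w, abs_nonneg w]
  have hinv : 1 / 2 ≤ exp (-(w ^ 2 / 2)) := by linarith [add_one_le_exp (-(w ^ 2 / 2))]
  have hprod : exp (w ^ 2 / 2) * exp (-(w ^ 2 / 2)) = 1 := by rw [← exp_add]; simp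
  nlinarith [exp_pos (w ^ 2 / 2)]

lemma millsRatio_mul_millsRatio_neg_le (w : ℝ) :
    millsRatio w * millsRatio (-w) ≤ √(2 * π) * exp (w ^ 2 / 2) := by
  wlog hw : 0 ≤ w generalizing w
  · simpa [mul_comm, neg_sq] using this (-w) (by linarith)
  have hsum : millsRatio w + millsRatio (-w) = √(2 * π) * exp (w ^ 2 / 2) := by
    rw [millsRatio_eq_gaussian_cdf, millsRatio_neg_eq_gaussian_cdf]; ring
  have hm := millsRatio_nonneg w
  have hm' := millsRatio_nonneg (-w)
  -- Either `m(w) ≤ 1`, or `0 ≤ w < 1`; then `m(w) ≤ √(2π)/2` and `e^{w²/2} ≤ 2` suffice.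
  by_cases hm1 : millsRatio w ≤ 1
  · nlinarith
  have hw1 : w ≤ 1 := by
    by_contra! h
    nlinarith [mul_millsRatio_le_one w]
  have hc : √(2 * π) ≤ 8 / 3 := sqrt_le_iff.2 ⟨by norm_num, by nlinarith [pi_lt_d2]⟩
  have hmc := millsRatio_le_of_nonneg hw
  have hE := exp_sq_half_le_two (abs_le.2 ⟨by linarith, hw1⟩)
  have hc0 := sqrt_nonneg (2 * π)
  nlinarith [mul_le_mul_of_nonneg_left hE (mul_nonneg hc0 (by linarith : 0 ≤ millsRatio w - 1)),
    mul_nonneg (by linarith : 0 ≤ √(2 * π) / 2 - millsRatio w)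
      (by linarith : 0 ≤ 3 * √(2 * π) / 2 - millsRatio w)]

lemma gaussian_cdf_mul_millsRatio_le_one (w : ℝ) :
    cdf (gaussianReal 0 1) w * millsRatio w ≤ 1 := by
  have h := millsRatio_mul_millsRatio_neg_le w
  rw [millsRatio_neg_eq_gaussian_cdf] at h
  have hpos : 0 < √(2 * π) * exp (w ^ 2 / 2) := by positivity
  exact le_of_mul_le_mul_right (by linarith) hpos

lemma one_sub_gaussian_cdf_mul_millsRatio_neg (w : ℝ) :
    (1 - cdf (gaussianReal 0 1) w) * millsRatio (-w) =
      cdf (gaussianReal 0 1) w * millsRatio w := by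
  rw [millsRatio_neg_eq_gaussian_cdf, millsRatio_eq_gaussian_cdf]
  ring

lemma integral_Iic_exp_neg_sq_half (w : ℝ) :
    ∫ t in Iic w, exp (-t ^ 2 / 2) = √(2 * π) * cdf (gaussianReal 0 1) w := by
  rw [cdf_eq_real, gaussianReal_real_eq_integral]
  field_simp

noncomputable def steinIndicatorSolution (x w : ℝ) : ℝ :=
  exp (w ^ 2 / 2) * ∫ t in Iic w,
    ((if t ≤ x then (1 : ℝ) else 0) - cdf (gaussianReal 0 1) x) * exp (-t ^ 2 / 2)

section steinIndicatorSolution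

variable {x w : ℝ}

lemma steinIndicatorSolution_of_le (h : w ≤ x) :
    steinIndicatorSolution x w = (1 - cdf (gaussianReal 0 1) x) * millsRatio (-w) := by
  have hintegrand : ∀ t ∈ Iic w, ((if t ≤ x then (1 : ℝ) else 0) - cdf (gaussianReal 0 1) x) *
      exp (-t ^ 2 / 2) = (1 - cdf (gaussianReal 0 1) x) * exp (-t ^ 2 / 2) :=
    fun t ht => by rw [if_pos (le_trans ht h)]
  rw [steinIndicatorSolution, setIntegral_congr_fun measurableSet_Iic hintegrand,
    integral_const_mul, integral_Iic_exp_neg_sq_half, millsRatio_neg_eq_gaussian_cdf]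
  ring

lemma steinIndicatorSolution_of_lt (h : x < w) :
    steinIndicatorSolution x w = cdf (gaussianReal 0 1) x * millsRatio w := by
  have hg : Integrable fun t : ℝ => exp (-t ^ 2 / 2) := by
    refine (integrable_exp_neg_mul_sq (one_half_pos (α := ℝ))).congr (ae_of_all _ fun t => ?_)
    ring_nf
  have hintegrand : (fun t => ((if t ≤ x then (1 : ℝ) else 0) - cdf (gaussianReal 0 1) x) *
      exp (-t ^ 2 / 2)) = fun t => (Iic x).indicator (fun t => exp (-t ^ 2 / 2)) t -
      cdf (gaussianReal 0 1) x * exp (-t ^ 2 / 2) := by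
    ext t
    by_cases ht : t ≤ x <;> simp [indicator, ht, sub_mul]
  rw [steinIndicatorSolution, hintegrand,
    integral_sub (hg.indicator measurableSet_Iic).integrableOn (hg.const_mul _).integrableOn,
    setIntegral_indicator measurableSet_Iic,
    inter_eq_right.2 (Iic_subset_Iic.2 h.le), integral_const_mul, integral_Iic_exp_neg_sq_half,
    integral_Iic_exp_neg_sq_half, millsRatio_eq_gaussian_cdf]
  ring

end steinIndicatorSolution

lemma abs_steinIndicatorSolution_le_one (x w : ℝ) : |steinIndicatorSolution x w| ≤ 1 := by
  rcases le_or_gt w x with h | h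
  · rw [steinIndicatorSolution_of_le h, abs_of_nonneg
      (mul_nonneg (sub_nonneg.2 (cdf_le_one _ _)) (millsRatio_nonneg _))]
    calc (1 - cdf (gaussianReal 0 1) x) * millsRatio (-w)
        ≤ (1 - cdf (gaussianReal 0 1) w) * millsRatio (-w) := by
          gcongr
          exact millsRatio_nonneg _
      _ = cdf (gaussianReal 0 1) w * millsRatio w := one_sub_gaussian_cdf_mul_millsRatio_neg w
      _ ≤ 1 := gaussian_cdf_mul_millsRatio_le_one w
  · rw [steinIndicatorSolution_of_lt h, abs_of_nonneg
      (mul_nonneg (cdf_nonneg _ _) (millsRatio_nonneg _))]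
    calc cdf (gaussianReal 0 1) x * millsRatio w
        ≤ cdf (gaussianReal 0 1) w * millsRatio w := by
          gcongr
          exact millsRatio_nonneg _
      _ ≤ 1 := gaussian_cdf_mul_millsRatio_le_one w

lemma abs_steinIndicatorSolution_derivative_le_one (x w : ℝ) :
    |w * steinIndicatorSolution x w +
      ((if w ≤ x then (1 : ℝ) else 0) - cdf (gaussianReal 0 1) x)| ≤ 1 := by
  set Φ := cdf (gaussianReal 0 1)
  have hsymm : w * ((1 - Φ w) * millsRatio (-w)) = w * (Φ w * millsRatio w) :=
    congrArg (w * ·) (one_sub_gaussian_cdf_mul_millsRatio_neg w)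
  have hmills : w * (Φ w * millsRatio w) ≤ Φ w := by
    nlinarith [mul_le_mul_of_nonneg_left (mul_millsRatio_le_one w)
      (cdf_nonneg (gaussianReal 0 1) w)]
  have hmills_neg : -w * ((1 - Φ w) * millsRatio (-w)) ≤ 1 - Φ w := by
    nlinarith [mul_le_mul_of_nonneg_left (mul_millsRatio_le_one (-w))
      (sub_nonneg.2 (cdf_le_one (gaussianReal 0 1) w))]
  rcases le_or_gt w x with h | h
  · have hfactor : 0 ≤ 1 + w * millsRatio (-w) := by linarith [mul_millsRatio_le_one (-w)]
    rw [steinIndicatorSolution_of_le h, if_pos h, abs_le]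
    constructor
    · nlinarith [mul_nonneg (sub_nonneg.2 (cdf_le_one (gaussianReal 0 1) x)) hfactor]
    · calc w * ((1 - Φ x) * millsRatio (-w)) + (1 - Φ x)
          = (1 - Φ x) * (1 + w * millsRatio (-w)) := by ring
        _ ≤ (1 - Φ w) * (1 + w * millsRatio (-w)) := by gcongr
        _ = (1 - Φ w) + w * (Φ w * millsRatio w) := by rw [← hsymm]; ring
        _ ≤ 1 := by linarith
  · have hfactor : 0 ≤ 1 - w * millsRatio w := by linarith [mul_millsRatio_le_one w]
    rw [steinIndicatorSolution_of_lt h, if_neg (not_le.2 h), abs_le]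
    constructor
    · calc -1 ≤ -(Φ w + -w * ((1 - Φ w) * millsRatio (-w))) := by linarith
        _ = -(Φ w * (1 - w * millsRatio w)) := by linear_combination hsymm
        _ ≤ -(Φ x * (1 - w * millsRatio w)) := by gcongr
        _ = w * (Φ x * millsRatio w) + (0 - Φ x) := by ring
    · nlinarith [mul_nonneg (cdf_nonneg (gaussianReal 0 1) x) hfactor]

/-- Bounds on the solution of the Stein equation for the indicator test function
`h(w) = 1_{w ≤ x}`: the bounded solution `f_x` satisfies `‖f_x‖_∞ ≤ 1` and
`‖f_x'‖_∞ ≤ 1`, where the a.e. derivative is given via the Stein equation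
`f_x'(w) = w f_x(w) + 1_{w ≤ x} - Φ(x)`. -/
theorem stein_solution_indicator_bounds (x : ℝ)
    (Φ : ℝ → ℝ) (hΦ : ∀ y, Φ y = ((gaussianReal 0 1) (Set.Iic y)).toReal)
    (f : ℝ → ℝ)
    (hf : ∀ w, f w = Real.exp (w ^ 2 / 2) *
      ∫ t in Set.Iic w, ((if t ≤ x then (1 : ℝ) else 0) - Φ x) * Real.exp (-t ^ 2 / 2)) :
    (∀ w, |f w| ≤ 1) ∧
    (∀ w, |w * f w + ((if w ≤ x then (1 : ℝ) else 0) - Φ x)| ≤ 1) := by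
  obtain rfl : Φ = cdf (gaussianReal 0 1) := funext fun y => (hΦ y).trans (cdf_eq_real _ y).symm
  obtain rfl : f = steinIndicatorSolution x := funext hf
  exact ⟨abs_steinIndicatorSolution_le_one x, abs_steinIndicatorSolution_derivative_le_one x⟩
end

section
/- For bounded measurable h : ℝ → ℝ with 0 ≤ h ≤ 1, the bounded solution f_h of the Stein equation satisfies ‖f_h'‖_∞ ≤ 2‖h‖_∞. -/
/-!
Write `φ(t) = exp (-t²/2)` and `c = E h(Z)`, so that `f(w) = e^{w²/2} ∫_{-∞}^w (h - c) φ`.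
Since `(h - c) φ` has total integral zero, the integral over `(-∞, w]` equals minus the integral
over `(w, ∞)`; bounding `|h - c| ≤ ‖h‖_∞` on whichever of the two half-lines lies away from the
origin and using the Mills-ratio bound `w ∫_w^∞ φ ≤ φ(w)` for `w ≥ 0` gives `|w f(w)| ≤ ‖h‖_∞`.
Together with `|h(w) - c| ≤ ‖h‖_∞`, valid because `h` and `c` both lie in `[0, ‖h‖_∞]`, the Stein
equation `f' = w f + h - c` yields the bound `2 ‖h‖_∞`.
-/

open MeasureTheory ProbabilityTheory Real Set Filter

lemma integrable_exp_neg_sq_div_two : Integrable fun t : ℝ => exp (-t ^ 2 / 2) := by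
  simpa [neg_div, div_eq_inv_mul] using integrable_exp_neg_mul_sq (by norm_num : (0 : ℝ) < 1 / 2)

lemma integrable_mul_exp_neg_sq_div_two : Integrable fun t : ℝ => t * exp (-t ^ 2 / 2) := by
  simpa [neg_div, div_eq_inv_mul] using
    integrable_mul_exp_neg_mul_sq (by norm_num : (0 : ℝ) < 1 / 2)

lemma integral_exp_neg_sq_div_two : ∫ t : ℝ, exp (-t ^ 2 / 2) = √(2 * π) := by
  simpa [neg_div, div_eq_inv_mul, div_inv_eq_mul, mul_comm] using integral_gaussian (1 / 2)

lemma hasDerivAt_neg_exp_neg_sq_div_two (t : ℝ) :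
    HasDerivAt (fun t : ℝ => -exp (-t ^ 2 / 2)) (t * exp (-t ^ 2 / 2)) t := by
  have hsq : HasDerivAt (fun t : ℝ => -t ^ 2 / 2) (-t) t :=
    ((hasDerivAt_pow 2 t).neg.div_const 2).congr_deriv (by norm_num; ring)
  exact hsq.exp.neg.congr_deriv (by ring)

lemma tendsto_exp_neg_sq_div_two_atTop :
    Tendsto (fun t : ℝ => exp (-t ^ 2 / 2)) atTop (nhds 0) := by
  refine tendsto_exp_atBot.comp (Tendsto.atBot_div_const two_pos ?_)
  exact tendsto_neg_atBot_iff.mpr (tendsto_pow_atTop two_ne_zero)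

lemma integral_Ioi_mul_exp_neg_sq_div_two (w : ℝ) :
    ∫ t in Ioi w, t * exp (-t ^ 2 / 2) = exp (-w ^ 2 / 2) := by
  rw [integral_Ioi_of_hasDerivAt_of_tendsto
    (hasDerivAt_neg_exp_neg_sq_div_two w).continuousAt.continuousWithinAt
    (fun x _ => hasDerivAt_neg_exp_neg_sq_div_two x)
    integrable_mul_exp_neg_sq_div_two.integrableOn
    (by simpa using tendsto_exp_neg_sq_div_two_atTop.neg)]
  ring

lemma mul_integral_Ioi_exp_neg_sq_div_two_le (w : ℝ) :
    w * ∫ t in Ioi w, exp (-t ^ 2 / 2) ≤ exp (-w ^ 2 / 2) := by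
  rw [← integral_const_mul, ← integral_Ioi_mul_exp_neg_sq_div_two w]
  refine setIntegral_mono_on (integrable_exp_neg_sq_div_two.const_mul w).integrableOn
    integrable_mul_exp_neg_sq_div_two.integrableOn measurableSet_Ioi fun t ht => ?_
  exact mul_le_mul_of_nonneg_right (le_of_lt ht) (exp_pos _).le

lemma integral_gaussianReal_zero_one {f : ℝ → ℝ} :
    ∫ z, f z ∂(gaussianReal 0 1) = (√(2 * π))⁻¹ * ∫ t, f t * exp (-t ^ 2 / 2) := by
  rw [integral_gaussianReal_eq_integral_smul one_ne_zero, ← integral_const_mul]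
  congr 1 with t
  simp [gaussianPDFReal, neg_div]
  ring

lemma integral_sub_integral_gaussianReal_mul_exp_eq_zero {f : ℝ → ℝ}
    (hf : Integrable fun t => f t * exp (-t ^ 2 / 2)) :
    ∫ t, (f t - ∫ z, f z ∂(gaussianReal 0 1)) * exp (-t ^ 2 / 2) = 0 := by
  simp_rw [sub_mul]
  rw [integral_sub hf (integrable_exp_neg_sq_div_two.const_mul _), integral_const_mul,
    integral_exp_neg_sq_div_two, integral_gaussianReal_zero_one]
  field_simp
  ring

lemma abs_setIntegral_le_mul_setIntegral_exp {g : ℝ → ℝ} {M : ℝ}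
    (hgM : ∀ t, |g t| ≤ M * exp (-t ^ 2 / 2)) (s : Set ℝ) :
    |∫ t in s, g t| ≤ M * ∫ t in s, exp (-t ^ 2 / 2) := by
  rw [← integral_const_mul]
  exact norm_integral_le_of_norm_le (integrable_exp_neg_sq_div_two.const_mul M).integrableOn
    (ae_of_all _ fun t => (norm_eq_abs _).trans_le (hgM t))

lemma abs_setIntegral_Iic_le_of_integral_eq_zero {g : ℝ → ℝ} {M : ℝ} (hg : Integrable g)
    (hgM : ∀ t, |g t| ≤ M * exp (-t ^ 2 / 2)) (hg0 : ∫ t, g t = 0) (w : ℝ) :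
    |∫ t in Iic w, g t| ≤ M * ∫ t in Ioi |w|, exp (-t ^ 2 / 2) := by
  rcases le_or_gt 0 w with hw | hw
  · have hsplit := intervalIntegral.integral_Iic_add_Ioi hg.integrableOn hg.integrableOn (b := w)
    rw [hg0, add_eq_zero_iff_eq_neg] at hsplit
    rw [hsplit, abs_neg, abs_of_nonneg hw]
    exact abs_setIntegral_le_mul_setIntegral_exp hgM _
  · rw [abs_of_neg hw, ← integral_comp_neg_Iic]
    simpa using abs_setIntegral_le_mul_setIntegral_exp hgM (Iic w)

lemma abs_mul_exp_mul_setIntegral_Iic_le {k : ℝ → ℝ} {M : ℝ} (hk : AEStronglyMeasurable k)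
    (hkM : ∀ t, |k t| ≤ M) (hk0 : ∫ t, k t * exp (-t ^ 2 / 2) = 0) (w : ℝ) :
    |w * (exp (w ^ 2 / 2) * ∫ t in Iic w, k t * exp (-t ^ 2 / 2))| ≤ M := by
  have hkM' : ∀ t, |k t * exp (-t ^ 2 / 2)| ≤ M * exp (-t ^ 2 / 2) := fun t => by
    rw [abs_mul, abs_of_pos (exp_pos _)]
    exact mul_le_mul_of_nonneg_right (hkM t) (exp_pos _).le
  have hM : 0 ≤ M := (abs_nonneg _).trans (hkM 0)
  have hint := abs_setIntegral_Iic_le_of_integral_eq_zero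
    (integrable_exp_neg_sq_div_two.bdd_mul hk (ae_of_all _ hkM)) hkM' hk0 w
  have hmills := mul_integral_Ioi_exp_neg_sq_div_two_le |w|
  rw [sq_abs] at hmills
  calc |w * (exp (w ^ 2 / 2) * ∫ t in Iic w, k t * exp (-t ^ 2 / 2))|
      = exp (w ^ 2 / 2) * (|w| * |∫ t in Iic w, k t * exp (-t ^ 2 / 2)|) := by
        rw [abs_mul, abs_mul, abs_of_pos (exp_pos _)]; ring
    _ ≤ exp (w ^ 2 / 2) * (M * (|w| * ∫ t in Ioi |w|, exp (-t ^ 2 / 2))) := by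
        rw [mul_left_comm M]
        gcongr
    _ ≤ exp (w ^ 2 / 2) * (M * exp (-w ^ 2 / 2)) := by gcongr
    _ = M := by rw [mul_left_comm, ← exp_add]; ring_nf; rw [exp_zero, mul_one]

lemma abs_sub_integral_le_iSup_abs {Ω : Type*} [MeasurableSpace Ω] (μ : Measure Ω)
    [IsProbabilityMeasure μ] {h : Ω → ℝ} (h0 : ∀ x, 0 ≤ h x) (hbdd : BddAbove (range h)) (x : Ω) :
    |h x - ∫ z, h z ∂μ| ≤ ⨆ v, |h v| := by
  simp_rw [abs_of_nonneg (h0 _)]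
  have hle : ∀ y, h y ≤ ⨆ v, h v := le_ciSup hbdd
  refine abs_sub_le_of_nonneg_of_le (h0 x) (hle x) (integral_nonneg h0) ?_
  calc ∫ z, h z ∂μ ≤ ∫ _, (⨆ v, h v) ∂μ :=
        integral_mono_of_nonneg (ae_of_all _ h0) (integrable_const _) (ae_of_all _ hle)
    _ = ⨆ v, h v := by simp

/-- For bounded measurable `h` with `0 ≤ h ≤ 1`, the bounded solution `f_h` of the
Stein equation satisfies `‖f_h'‖_∞ ≤ 2 ‖h‖_∞`, where the a.e. derivative is given via
the Stein equation `f_h'(w) = w f_h(w) + h(w) - E h(Z)`. -/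
theorem stein_solution_first_derivative_bound
    (h : ℝ → ℝ) (hmeas : Measurable h) (hh : ∀ w, 0 ≤ h w ∧ h w ≤ 1)
    (f : ℝ → ℝ)
    (hf : ∀ w, f w = Real.exp (w ^ 2 / 2) *
      ∫ t in Set.Iic w, (h t - ∫ z, h z ∂(gaussianReal 0 1)) * Real.exp (-t ^ 2 / 2)) :
    ∀ w, |w * f w + (h w - ∫ z, h z ∂(gaussianReal 0 1))| ≤ 2 * ⨆ v, |h v| := by
  intro w
  have hbdd : BddAbove (range h) := ⟨1, by rintro _ ⟨v, rfl⟩; exact (hh v).2⟩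
  have hdev := abs_sub_integral_le_iSup_abs (gaussianReal 0 1) (fun v => (hh v).1) hbdd
  have hnorm_le_one : ∀ t, ‖h t‖ ≤ 1 := fun t => abs_le.mpr ⟨by linarith [(hh t).1], (hh t).2⟩
  have hzero := integral_sub_integral_gaussianReal_mul_exp_eq_zero
    (integrable_exp_neg_sq_div_two.bdd_mul hmeas.aestronglyMeasurable (ae_of_all _ hnorm_le_one))
  have hwf : |w * f w| ≤ ⨆ v, |h v| := by
    rw [hf]
    exact abs_mul_exp_mul_setIntegral_Iic_le
      (hmeas.sub measurable_const).aestronglyMeasurable hdev hzero w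
  linarith [abs_add_le (w * f w) (h w - ∫ z, h z ∂(gaussianReal 0 1)), hdev w]
end

section
/- Let W be a real random variable with E W = 0 and Var(W) = B² > 0. Then there exists an absolutely continuous random variable W* with density function x ↦ E[W·1_{W > x}]/B² such that E[W f(W)] = B² E[f'(W*)] for every absolutely continuous f with E|W f(W)| < ∞ and E|f'(W*)| < ∞. -/
open MeasureTheory ProbabilityTheory Set Function

/-!
With `K(w, x) = |w| · 1{x lies between 0 and w}` one has, for every real `w` and every `x`,
`∫ K(w, x) dx = w²` and `w (f w - f 0) = ∫ f'(x) K(w, x) dx`, while `E[K(W, x)] = E[W 1{W > x}]`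
(for `x < 0` this uses `E W = 0`). Hence `p = E[K(W, ·)]/B²` is nonnegative, has total mass
`E W² / B² = 1` by Tonelli, and Fubini turns `E[W f(W)] = E[W (f W - f 0)]` into `B² ∫ f' p`.
-/

/-- The half-open interval makes `zeroBiasKernel w x = w · 1{x < w}` exact at `x = w` for `x ≥ 0`;
on the integration side the choice of endpoints is invisible to Lebesgue measure. -/
noncomputable def zeroBiasKernel (w x : ℝ) : ℝ :=
  (Ico (min 0 w) (max 0 w)).indicator (fun _ => |w|) x

theorem measurable_zeroBiasKernel : Measurable (uncurry zeroBiasKernel) := by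
  refine Measurable.ite (p := fun z : ℝ × ℝ => z.2 ∈ Ico (min 0 z.1) (max 0 z.1)) ?_
    (by fun_prop) measurable_const
  change MeasurableSet ({z : ℝ × ℝ | min 0 z.1 ≤ z.2} ∩ {z | z.2 < max 0 z.1})
  exact (measurableSet_le (by fun_prop) (by fun_prop)).inter
    (measurableSet_lt (by fun_prop) (by fun_prop))

theorem zeroBiasKernel_nonneg (w x : ℝ) : 0 ≤ zeroBiasKernel w x :=
  indicator_nonneg (fun _ _ => abs_nonneg w) x

theorem zeroBiasKernel_of_nonneg {x : ℝ} (hx : 0 ≤ x) (w : ℝ) :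
    zeroBiasKernel w x = w * if x < w then 1 else 0 := by
  simp only [zeroBiasKernel, indicator_apply, mem_Ico]
  split_ifs <;> grind

theorem mul_ite_lt_eq_zeroBiasKernel_add_of_neg {x : ℝ} (hx : x < 0) (w : ℝ) :
    (w * if x < w then 1 else 0) = zeroBiasKernel w x + w := by
  simp only [zeroBiasKernel, indicator_apply, mem_Ico]
  split_ifs <;> grind

theorem integrable_zeroBiasKernel (w : ℝ) : Integrable (zeroBiasKernel w) :=
  (integrable_indicator_iff measurableSet_Ico).2 (integrableOn_const measure_Ico_lt_top.ne)

theorem integral_zeroBiasKernel (w : ℝ) : ∫ x, zeroBiasKernel w x = w ^ 2 := by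
  simp only [zeroBiasKernel]
  rw [integral_indicator_const _ measurableSet_Ico, Real.volume_real_Ico,
    max_sub_min_eq_abs', smul_eq_mul]
  simp [sq]

theorem mul_intervalIntegral_eq_integral_zeroBiasKernel_mul (w : ℝ) (g : ℝ → ℝ) :
    w * ∫ x in 0..w, g x = ∫ x, zeroBiasKernel w x * g x := by
  simp only [zeroBiasKernel, ← indicator_mul_left]
  rw [integral_indicator measurableSet_Ico, integral_const_mul, integral_Ico_eq_integral_Ioc,
    intervalIntegral.intervalIntegral_eq_integral_uIoc, smul_eq_mul, ← mul_assoc]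
  congr 1
  split_ifs with h
  · simp [abs_of_nonneg h]
  · simp [abs_of_neg (not_le.1 h)]

section Mixture

variable {α β : Type*} [MeasurableSpace α] [MeasurableSpace β] {μ : Measure α} {ν : Measure β}
  [SFinite μ] [SFinite ν] {k : α → β → ℝ}

theorem lintegral_ofReal_integral_eq_lintegral_lintegral (hk : Measurable (uncurry k))
    (hk0 : ∀ a b, 0 ≤ k a b) (hki : ∀ b, Integrable (fun a => k a b) μ) :
    ∫⁻ b, ENNReal.ofReal (∫ a, k a b ∂μ) ∂ν = ∫⁻ a, ∫⁻ b, ENNReal.ofReal (k a b) ∂ν ∂μ := by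
  simp_rw [ofReal_integral_eq_lintegral_ofReal (hki _) (ae_of_all _ (hk0 · _))]
  exact (lintegral_lintegral_swap hk.ennreal_ofReal.aemeasurable).symm

theorem integrable_prod_mul_of_integrable_withDensity (hk : Measurable (uncurry k))
    (hk0 : ∀ a b, 0 ≤ k a b) (hki : ∀ b, Integrable (fun a => k a b) μ) {g : β → ℝ}
    (hg : Measurable g)
    (hgi : Integrable g (ν.withDensity fun b => ENNReal.ofReal (∫ a, k a b ∂μ))) :
    Integrable (uncurry fun a b => k a b * g b) (μ.prod ν) := by
  have hkg : Measurable (uncurry fun a b => k a b * |g b|) :=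
    hk.mul (hg.abs.comp measurable_snd)
  refine ⟨(hk.mul (hg.comp measurable_snd)).aestronglyMeasurable, ?_⟩
  calc ∫⁻ z, ‖k z.1 z.2 * g z.2‖ₑ ∂μ.prod ν
      = ∫⁻ z, ENNReal.ofReal (uncurry (fun a b => k a b * |g b|) z) ∂μ.prod ν := by
        simp_rw [Real.enorm_eq_ofReal_abs, abs_mul, abs_of_nonneg (hk0 _ _)]
        rfl
    _ = ∫⁻ b, ENNReal.ofReal (∫ a, k a b ∂μ) * ‖g b‖ₑ ∂ν := by
        rw [lintegral_prod _ hkg.ennreal_ofReal.aemeasurable]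
        change ∫⁻ a, ∫⁻ b, ENNReal.ofReal (k a b * |g b|) ∂ν ∂μ = _
        rw [← lintegral_ofReal_integral_eq_lintegral_lintegral hkg
          (fun a b => mul_nonneg (hk0 a b) (abs_nonneg _)) (fun b => (hki b).mul_const _)]
        simp_rw [integral_mul_const, ENNReal.ofReal_mul (integral_nonneg (hk0 · _)),
          Real.enorm_eq_ofReal_abs]
    _ < ⊤ :=
        (lintegral_withDensity_eq_lintegral_mul _
          hk.stronglyMeasurable.integral_prod_left.measurable.ennreal_ofReal
          hg.enorm).symm.trans_lt hgi.2

theorem integral_integral_mul_eq_integral_withDensity (hk : Measurable (uncurry k))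
    (hk0 : ∀ a b, 0 ≤ k a b) (hki : ∀ b, Integrable (fun a => k a b) μ) {g : β → ℝ}
    (hg : Measurable g)
    (hgi : Integrable g (ν.withDensity fun b => ENNReal.ofReal (∫ a, k a b ∂μ))) :
    ∫ a, ∫ b, k a b * g b ∂ν ∂μ =
      ∫ b, g b ∂(ν.withDensity fun b => ENNReal.ofReal (∫ a, k a b ∂μ)) := by
  rw [integral_integral_swap (integrable_prod_mul_of_integrable_withDensity hk hk0 hki hg hgi),
    integral_withDensity_eq_integral_toReal_smul
      hk.stronglyMeasurable.integral_prod_left.measurable.ennreal_ofReal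
      (ae_of_all _ fun _ => ENNReal.ofReal_lt_top)]
  simp_rw [integral_mul_const, ENNReal.toReal_ofReal (integral_nonneg (hk0 · _)), smul_eq_mul]

end Mixture

section RandomVariable

variable {Ω : Type*} [MeasurableSpace Ω] {μ : Measure Ω} {X : Ω → ℝ}

theorem integrable_zeroBiasKernel_comp (hX : Integrable X μ) (x : ℝ) :
    Integrable (fun ω => zeroBiasKernel (X ω) x) μ := by
  refine hX.mono ((measurable_zeroBiasKernel.comp (measurable_id.prodMk measurable_const)
    ).comp_aemeasurable hX.aemeasurable).aestronglyMeasurable (ae_of_all _ fun ω => ?_)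
  rw [Real.norm_of_nonneg (zeroBiasKernel_nonneg _ _), Real.norm_eq_abs]
  exact indicator_le_self' (fun _ _ => abs_nonneg _) x

theorem integral_mul_ite_lt_eq_integral_zeroBiasKernel (hX : Integrable X μ)
    (hX0 : ∫ ω, X ω ∂μ = 0) (x : ℝ) :
    ∫ ω, X ω * (if x < X ω then (1 : ℝ) else 0) ∂μ = ∫ ω, zeroBiasKernel (X ω) x ∂μ := by
  rcases le_or_gt 0 x with hx | hx
  · simp_rw [zeroBiasKernel_of_nonneg hx]
  · simp_rw [mul_ite_lt_eq_zeroBiasKernel_add_of_neg hx]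
    rw [integral_add (integrable_zeroBiasKernel_comp hX x) hX, hX0, add_zero]

theorem lintegral_lintegral_ofReal_zeroBiasKernel_div (hX2 : Integrable (fun ω => X ω ^ 2) μ)
    {c : ℝ} (hc : 0 ≤ c) :
    ∫⁻ ω, ∫⁻ x, ENNReal.ofReal (zeroBiasKernel (X ω) x / c) ∂volume ∂μ =
      ENNReal.ofReal ((∫ ω, X ω ^ 2 ∂μ) / c) := by
  have hK : ∀ w, ∫⁻ x, ENNReal.ofReal (zeroBiasKernel w x / c) = ENNReal.ofReal (w ^ 2 / c) :=
    fun w => by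
      rw [← ofReal_integral_eq_lintegral_ofReal ((integrable_zeroBiasKernel w).div_const c)
        (ae_of_all _ fun x => div_nonneg (zeroBiasKernel_nonneg w x) hc), integral_div,
        integral_zeroBiasKernel]
  simp_rw [hK]
  rw [← ofReal_integral_eq_lintegral_ofReal (hX2.div_const c)
    (ae_of_all _ fun ω => div_nonneg (sq_nonneg _) hc), integral_div]

end RandomVariable

/-- Existence of the zero-bias transform: for `W` with mean `0` and variance `B² > 0`,
the function `x ↦ E[W 1_{W > x}]/B²` is a probability density on `ℝ`, and a random
variable `W*` with this density satisfies `E[W f(W)] = B² E[f'(W*)]` for all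
absolutely continuous `f` with the relevant expectations existing. -/
theorem zero_bias_transform_exists
    {Ω : Type*} [MeasureSpace Ω] [IsProbabilityMeasure (ℙ : Measure Ω)]
    (W : Ω → ℝ) (hmeas : Measurable W) (B : ℝ) (hB : 0 < B)
    (hmean : ∫ ω, W ω ∂ℙ = 0)
    (hvar : ∫ ω, (W ω) ^ 2 ∂ℙ = B ^ 2)
    (hL2 : Integrable (fun ω => (W ω) ^ 2) ℙ)
    (p : ℝ → ℝ)
    (hp : ∀ x, p x = (∫ ω, W ω * (if x < W ω then (1 : ℝ) else 0) ∂ℙ) / B ^ 2) :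
    (∀ x, 0 ≤ p x) ∧
    IsProbabilityMeasure (volume.withDensity (fun x => ENNReal.ofReal (p x))) ∧
    (∀ f f' : ℝ → ℝ, Measurable f' →
      (∀ a b : ℝ, f b - f a = ∫ t in a..b, f' t) →
      Integrable (fun ω => W ω * f (W ω)) ℙ →
      Integrable f' (volume.withDensity (fun x => ENNReal.ofReal (p x))) →
      ∫ ω, W ω * f (W ω) ∂ℙ =
        B ^ 2 * ∫ x, f' x ∂(volume.withDensity (fun x => ENNReal.ofReal (p x)))) := by
  have hW : Integrable W ℙ :=
    ((memLp_two_iff_integrable_sq hmeas.aestronglyMeasurable).2 hL2).integrable one_le_two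
  have hB2 : B ^ 2 ≠ 0 := by positivity
  set k : Ω → ℝ → ℝ := fun ω x => zeroBiasKernel (W ω) x / B ^ 2 with hk_def
  have hk : Measurable (uncurry k) :=
    (measurable_zeroBiasKernel.comp (hmeas.prodMap measurable_id)).div_const _
  have hk0 : ∀ ω x, 0 ≤ k ω x := fun ω x => div_nonneg (zeroBiasKernel_nonneg _ _) (sq_nonneg B)
  have hki : ∀ x, Integrable (fun ω => k ω x) ℙ := fun x =>
    (integrable_zeroBiasKernel_comp hW x).div_const _
  have hpk : p = fun x => ∫ ω, k ω x ∂ℙ := by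
    funext x
    rw [hp, integral_mul_ite_lt_eq_integral_zeroBiasKernel hW hmean, integral_div]
  subst hpk
  refine ⟨fun x => integral_nonneg (hk0 · x), ⟨?_⟩, fun f f' hf' hFTC hWf hf'i => ?_⟩
  · rw [withDensity_apply _ MeasurableSet.univ, setLIntegral_univ,
      lintegral_ofReal_integral_eq_lintegral_lintegral hk hk0 hki,
      lintegral_lintegral_ofReal_zeroBiasKernel_div hL2 (sq_nonneg B), hvar, div_self hB2,
      ENNReal.ofReal_one]
  · calc ∫ ω, W ω * f (W ω) ∂ℙ = ∫ ω, W ω * (f (W ω) - f 0) ∂ℙ := by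
          simp_rw [mul_sub]
          rw [integral_sub hWf (hW.mul_const _), integral_mul_const, hmean, zero_mul, sub_zero]
      _ = B ^ 2 * ∫ ω, ∫ x, k ω x * f' x ∂volume ∂ℙ := by
          simp_rw [hFTC, mul_intervalIntegral_eq_integral_zeroBiasKernel_mul, hk_def,
            ← integral_const_mul]
          congr! 2 with ω x
          field_simp
      _ = _ := by rw [integral_integral_mul_eq_integral_withDensity hk hk0 hki hf' hf'i]
end

section
/- If W has mean 0, variance 1, and W* is a zero-bias transform of W defined on the same probability space, then the Wasserstein distance between the law of W and the standard normal satisfies d_W(W, Z) ≤ 2 E|W* - W|. -/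
/-!
Stein's method. For a 1-Lipschitz test function `h`, put `H = h - E h(Z)` and let `f` solve
Stein's equation `f' w - w f w = H w`, namely `f w = φ(w)⁻¹ ∫_{t ≤ w} H φ`. Then
`E h(W) - E h(Z) = E[f'(W) - W f(W)] = E[f'(W) - f'(W*)]` by the zero-bias relation, so it
suffices that `f' = w f + H` is 2-Lipschitz, i.e. that `|(w f)'| = |(1 + w²) f + w H| ≤ 1`.
Multiplied by `φ(w)`, and using `∫ H φ = 0`, the left side is `P · J₋ - Q · J₊`, where
`J₋ = ∫_{t ≤ w} (H t - H w) φ` and `J₊ = ∫_{t > w} (H t - H w) φ` are bounded through the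
Lipschitz property by the first absolute moments of the two Gaussian tails, and
`P = ∫_{t > w} (t - w)² φ ≥ 0`, `Q = ∫_{t ≤ w} (t - w)² φ ≥ 0`. The resulting bound is
exactly `φ(w)`.
-/

open MeasureTheory ProbabilityTheory Real Set
open scoped NNReal

section ImproperFTC

variable {E : Type*} [NormedAddCommGroup E] [NormedSpace ℝ E] [CompleteSpace E]
  {F f : ℝ → E}

lemma integral_Ioi_of_hasDerivAt_of_integrable (hF : ∀ x, HasDerivAt F (f x) x)
    (hFi : Integrable F) (hfi : Integrable f) (a : ℝ) : ∫ x in Ioi a, f x = -F a := by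
  have hlim := tendsto_zero_of_hasDerivAt_of_integrableOn_Ioi (a := a) (fun x _ => hF x)
    hfi.integrableOn hFi.integrableOn
  rw [integral_Ioi_of_hasDerivAt_of_tendsto' (fun x _ => hF x) hfi.integrableOn hlim, zero_sub]

lemma integral_Iic_of_hasDerivAt_of_integrable (hF : ∀ x, HasDerivAt F (f x) x)
    (hFi : Integrable F) (hfi : Integrable f) (a : ℝ) : ∫ x in Iic a, f x = F a := by
  have hlim := tendsto_zero_of_hasDerivAt_of_integrableOn_Iic (a := a) (fun x _ => hF x)
    hfi.integrableOn hFi.integrableOn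
  rw [integral_Iic_of_hasDerivAt_of_tendsto' (fun x _ => hF x) hfi.integrableOn hlim, sub_zero]

end ImproperFTC

lemma LipschitzWith.abs_le_add_mul_abs {K : ℝ≥0} {g : ℝ → ℝ} (hg : LipschitzWith K g) (x : ℝ) :
    |g x| ≤ |g 0| + K * |x| := by
  have h := hg.dist_le_mul x 0
  rw [Real.dist_eq, Real.dist_eq, sub_zero] at h
  linarith [abs_sub_abs_le_abs_sub (g x) (g 0)]

lemma LipschitzWith.integrable_comp {α : Type*} [MeasurableSpace α] {μ : Measure α}
    [IsFiniteMeasure μ] {K : ℝ≥0} {g : ℝ → ℝ} (hg : LipschitzWith K g) {X : α → ℝ}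
    (hX : Integrable X μ) : Integrable (fun a => g (X a)) μ :=
  ((integrable_const |g 0|).add (hX.abs.const_mul K)).mono'
    (hg.continuous.comp_aestronglyMeasurable hX.1)
    (ae_of_all _ fun a => hg.abs_le_add_mul_abs (X a))

lemma hasDerivAt_setIntegral_Iic {g : ℝ → ℝ} (hg : Continuous g) (hgi : Integrable g) (w : ℝ) :
    HasDerivAt (fun x => ∫ t in Iic x, g t) (g w) w := by
  have hsplit :
      (fun x => ∫ t in Iic x, g t) = fun x => (∫ t in Iic 0, g t) + ∫ t in 0..x, g t := by
    ext x
    rw [← intervalIntegral.integral_Iic_sub_Iic hgi.integrableOn hgi.integrableOn]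
    ring
  rw [hsplit]
  exact (intervalIntegral.integral_hasDerivAt_right (hg.intervalIntegrable 0 w)
    (hg.stronglyMeasurableAtFilter _ _) hg.continuousAt).const_add _

local notation "φ" => gaussianPDFReal 0 1

lemma gaussianPDFReal_zero_one (x : ℝ) : φ x = (√(2 * π))⁻¹ * exp (-x ^ 2 / 2) := by
  simp [gaussianPDFReal]

lemma gaussianPDFReal_zero_one_pos (x : ℝ) : 0 < φ x := gaussianPDFReal_pos 0 1 x one_ne_zero

lemma hasDerivAt_gaussianPDFReal_zero_one (x : ℝ) : HasDerivAt φ (-x * φ x) x := by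
  have hexp : HasDerivAt (fun x : ℝ => -x ^ 2 / 2) (-x) x := by
    simpa using (((hasDerivAt_pow 2 x).neg).div_const 2).congr_deriv (by ring)
  rw [show φ = fun x => (√(2 * π))⁻¹ * exp (-x ^ 2 / 2) from funext gaussianPDFReal_zero_one]
  exact ((hexp.exp).const_mul _).congr_deriv (by ring)

lemma continuous_gaussianPDFReal_zero_one : Continuous φ :=
  continuous_iff_continuousAt.2 fun x => (hasDerivAt_gaussianPDFReal_zero_one x).continuousAt

lemma integrable_pow_mul_gaussianPDFReal_zero_one (n : ℕ) :
    Integrable fun x => x ^ n * φ x := by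
  have := (integrable_rpow_mul_exp_neg_mul_sq (b := 1 / 2) (by norm_num)
    (s := n) (by linarith [n.cast_nonneg (α := ℝ)])).const_mul (√(2 * π))⁻¹
  refine this.congr (ae_of_all _ fun x => ?_)
  simp only [rpow_natCast, gaussianPDFReal_zero_one]
  ring_nf

lemma integrable_gaussianPDFReal_zero_one : Integrable φ := integrable_gaussianPDFReal 0 1

lemma integrable_mul_gaussianPDFReal_zero_one : Integrable fun x => x * φ x := by
  simpa using integrable_pow_mul_gaussianPDFReal_zero_one 1

lemma integrable_sq_sub_one_mul_gaussianPDFReal_zero_one :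
    Integrable fun x => (x ^ 2 - 1) * φ x := by
  simpa only [sub_mul, one_mul] using
    (integrable_pow_mul_gaussianPDFReal_zero_one 2).sub' integrable_gaussianPDFReal_zero_one

lemma hasDerivAt_neg_gaussianPDFReal_zero_one (x : ℝ) :
    HasDerivAt (fun t => -φ t) (x * φ x) x :=
  (hasDerivAt_gaussianPDFReal_zero_one x).neg.congr_deriv (by ring)

lemma hasDerivAt_neg_mul_gaussianPDFReal_zero_one (x : ℝ) :
    HasDerivAt (fun t => -(t * φ t)) ((x ^ 2 - 1) * φ x) x :=
  ((hasDerivAt_id x).mul (hasDerivAt_gaussianPDFReal_zero_one x)).neg.congr_deriv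
    (by simp only [id]; ring)

lemma integral_Iic_mul_gaussianPDFReal_zero_one (w : ℝ) : ∫ t in Iic w, t * φ t = -φ w :=
  integral_Iic_of_hasDerivAt_of_integrable hasDerivAt_neg_gaussianPDFReal_zero_one
    integrable_gaussianPDFReal_zero_one.neg integrable_mul_gaussianPDFReal_zero_one w

lemma integral_Ioi_mul_gaussianPDFReal_zero_one (w : ℝ) : ∫ t in Ioi w, t * φ t = φ w := by
  rw [integral_Ioi_of_hasDerivAt_of_integrable hasDerivAt_neg_gaussianPDFReal_zero_one
    integrable_gaussianPDFReal_zero_one.neg integrable_mul_gaussianPDFReal_zero_one w, neg_neg]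

lemma integral_Iic_sq_sub_one_mul_gaussianPDFReal_zero_one (w : ℝ) :
    ∫ t in Iic w, (t ^ 2 - 1) * φ t = -(w * φ w) :=
  integral_Iic_of_hasDerivAt_of_integrable hasDerivAt_neg_mul_gaussianPDFReal_zero_one
    integrable_mul_gaussianPDFReal_zero_one.neg integrable_sq_sub_one_mul_gaussianPDFReal_zero_one w

lemma integral_Ioi_sq_sub_one_mul_gaussianPDFReal_zero_one (w : ℝ) :
    ∫ t in Ioi w, (t ^ 2 - 1) * φ t = w * φ w := by
  rw [integral_Ioi_of_hasDerivAt_of_integrable hasDerivAt_neg_mul_gaussianPDFReal_zero_one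
    integrable_mul_gaussianPDFReal_zero_one.neg
    integrable_sq_sub_one_mul_gaussianPDFReal_zero_one w, neg_neg]

lemma integral_Iic_sub_mul_gaussianPDFReal_zero_one (w : ℝ) :
    ∫ t in Iic w, (w - t) * φ t = w * (∫ t in Iic w, φ t) + φ w := by
  simp_rw [sub_mul]
  rw [integral_sub (integrable_gaussianPDFReal_zero_one.const_mul w).integrableOn
    integrable_mul_gaussianPDFReal_zero_one.integrableOn, integral_const_mul,
    integral_Iic_mul_gaussianPDFReal_zero_one, sub_neg_eq_add]

lemma integral_Ioi_sub_mul_gaussianPDFReal_zero_one (w : ℝ) :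
    ∫ t in Ioi w, (t - w) * φ t = φ w - w * ∫ t in Ioi w, φ t := by
  simp_rw [sub_mul]
  rw [integral_sub integrable_mul_gaussianPDFReal_zero_one.integrableOn
    (integrable_gaussianPDFReal_zero_one.const_mul w).integrableOn, integral_const_mul,
    integral_Ioi_mul_gaussianPDFReal_zero_one]

lemma setIntegral_sub_sq_mul_gaussianPDFReal_zero_one (s : Set ℝ) (w : ℝ) :
    ∫ t in s, (t - w) ^ 2 * φ t = (∫ t in s, (t ^ 2 - 1) * φ t) - 2 * w * (∫ t in s, t * φ t)
      + (1 + w ^ 2) * ∫ t in s, φ t := by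
  have hsplit : ∀ t, (t - w) ^ 2 * φ t = ((t ^ 2 - 1) * φ t - 2 * w * (t * φ t))
      + (1 + w ^ 2) * φ t := fun t => by ring
  simp_rw [hsplit]
  rw [integral_add (integrable_sq_sub_one_mul_gaussianPDFReal_zero_one.sub'
      (integrable_mul_gaussianPDFReal_zero_one.const_mul _)).integrableOn
      (integrable_gaussianPDFReal_zero_one.const_mul _).integrableOn,
    integral_sub integrable_sq_sub_one_mul_gaussianPDFReal_zero_one.integrableOn
      (integrable_mul_gaussianPDFReal_zero_one.const_mul _).integrableOn,
    integral_const_mul, integral_const_mul]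

lemma integral_Iic_sub_sq_mul_gaussianPDFReal_zero_one (w : ℝ) :
    ∫ t in Iic w, (t - w) ^ 2 * φ t = (1 + w ^ 2) * (∫ t in Iic w, φ t) + w * φ w := by
  rw [setIntegral_sub_sq_mul_gaussianPDFReal_zero_one, integral_Iic_mul_gaussianPDFReal_zero_one,
    integral_Iic_sq_sub_one_mul_gaussianPDFReal_zero_one]
  ring

lemma integral_Ioi_sub_sq_mul_gaussianPDFReal_zero_one (w : ℝ) :
    ∫ t in Ioi w, (t - w) ^ 2 * φ t = (1 + w ^ 2) * (∫ t in Ioi w, φ t) - w * φ w := by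
  rw [setIntegral_sub_sq_mul_gaussianPDFReal_zero_one, integral_Ioi_mul_gaussianPDFReal_zero_one,
    integral_Ioi_sq_sub_one_mul_gaussianPDFReal_zero_one]
  ring

lemma integral_Iic_add_Ioi_gaussianPDFReal_zero_one (w : ℝ) :
    (∫ t in Iic w, φ t) + ∫ t in Ioi w, φ t = 1 := by
  rw [intervalIntegral.integral_Iic_add_Ioi integrable_gaussianPDFReal_zero_one.integrableOn
    integrable_gaussianPDFReal_zero_one.integrableOn, integral_gaussianPDFReal_eq_one 0 one_ne_zero]

noncomputable def steinSolution (H : ℝ → ℝ) (w : ℝ) : ℝ := (∫ t in Iic w, H t * φ t) / φ w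

section Stein

variable {H : ℝ → ℝ} {K : ℝ≥0}

lemma integrable_mul_gaussianPDFReal_zero_one_of_lipschitzWith (hH : LipschitzWith K H) :
    Integrable fun t => H t * φ t := by
  refine ((integrable_gaussianPDFReal_zero_one.const_mul |H 0|).add
    (integrable_mul_gaussianPDFReal_zero_one.abs.const_mul K)).mono'
    (hH.continuous.mul continuous_gaussianPDFReal_zero_one).aestronglyMeasurable
    (ae_of_all _ fun t => ?_)
  have hφ := gaussianPDFReal_zero_one_pos t
  simp only [Pi.add_apply, norm_mul, Real.norm_eq_abs, abs_mul, abs_of_pos hφ]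
  nlinarith [hH.abs_le_add_mul_abs t]

lemma hasDerivAt_steinSolution (hHc : Continuous H) (hHi : Integrable fun t => H t * φ t)
    (w : ℝ) : HasDerivAt (steinSolution H) (w * steinSolution H w + H w) w := by
  have hφ := (gaussianPDFReal_zero_one_pos w).ne'
  refine ((hasDerivAt_setIntegral_Iic (hHc.mul continuous_gaussianPDFReal_zero_one) hHi w).div
    (hasDerivAt_gaussianPDFReal_zero_one w) hφ).congr_deriv ?_
  simp only [steinSolution, Pi.mul_apply]
  field_simp
  ring

lemma hasDerivAt_mul_steinSolution (hHc : Continuous H) (hHi : Integrable fun t => H t * φ t)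
    (w : ℝ) : HasDerivAt (fun x => x * steinSolution H x)
      ((1 + w ^ 2) * steinSolution H w + w * H w) w :=
  ((hasDerivAt_id w).mul (hasDerivAt_steinSolution hHc hHi w)).congr_deriv (by simp only [id]; ring)

lemma abs_integral_Iic_sub_mul_gaussianPDFReal_zero_one_le (hH : LipschitzWith K H) (w : ℝ) :
    |∫ t in Iic w, (H t - H w) * φ t| ≤ K * (w * (∫ t in Iic w, φ t) + φ w) := by
  have hint : Integrable fun t => (w - t) * φ t := by
    simpa only [sub_mul] using
      (integrable_gaussianPDFReal_zero_one.const_mul w).sub' integrable_mul_gaussianPDFReal_zero_one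
  rw [← Real.norm_eq_abs, ← integral_Iic_sub_mul_gaussianPDFReal_zero_one, ← integral_const_mul]
  refine norm_integral_le_of_norm_le (hint.const_mul K).integrableOn ?_
  filter_upwards [ae_restrict_mem measurableSet_Iic] with t (ht : t ≤ w)
  have hlip := hH.dist_le_mul t w
  rw [Real.dist_eq, Real.dist_eq, abs_of_nonpos (sub_nonpos.2 ht)] at hlip
  rw [norm_mul, Real.norm_eq_abs, Real.norm_of_nonneg (gaussianPDFReal_zero_one_pos t).le,
    ← mul_assoc]
  exact mul_le_mul_of_nonneg_right (by linarith) (gaussianPDFReal_zero_one_pos t).le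

lemma abs_integral_Ioi_sub_mul_gaussianPDFReal_zero_one_le (hH : LipschitzWith K H) (w : ℝ) :
    |∫ t in Ioi w, (H t - H w) * φ t| ≤ K * (φ w - w * ∫ t in Ioi w, φ t) := by
  have hint : Integrable fun t => (t - w) * φ t := by
    simpa only [sub_mul] using
      integrable_mul_gaussianPDFReal_zero_one.sub' (integrable_gaussianPDFReal_zero_one.const_mul w)
  rw [← Real.norm_eq_abs, ← integral_Ioi_sub_mul_gaussianPDFReal_zero_one, ← integral_const_mul]
  refine norm_integral_le_of_norm_le (hint.const_mul K).integrableOn ?_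
  filter_upwards [ae_restrict_mem measurableSet_Ioi] with t (ht : w < t)
  have hlip := hH.dist_le_mul t w
  rw [Real.dist_eq, Real.dist_eq, abs_of_pos (sub_pos.2 ht)] at hlip
  rw [norm_mul, Real.norm_eq_abs, Real.norm_of_nonneg (gaussianPDFReal_zero_one_pos t).le,
    ← mul_assoc]
  exact mul_le_mul_of_nonneg_right hlip (gaussianPDFReal_zero_one_pos t).le

lemma gaussianPDFReal_zero_one_mul_deriv_mul_steinSolution
    (hHi : Integrable fun t => H t * φ t) (hH0 : ∫ t, H t * φ t = 0) (w : ℝ) :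
    φ w * ((1 + w ^ 2) * steinSolution H w + w * H w) =
      ((1 + w ^ 2) * (∫ t in Ioi w, φ t) - w * φ w) * (∫ t in Iic w, (H t - H w) * φ t)
        - ((1 + w ^ 2) * (∫ t in Iic w, φ t) + w * φ w) * ∫ t in Ioi w, (H t - H w) * φ t := by
  have hφ := (gaussianPDFReal_zero_one_pos w).ne'
  have hsub : ∀ s : Set ℝ,
      ∫ t in s, (H t - H w) * φ t = (∫ t in s, H t * φ t) - H w * ∫ t in s, φ t := by
    intro s
    simp_rw [sub_mul]
    rw [integral_sub hHi.integrableOn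
      (integrable_gaussianPDFReal_zero_one.const_mul _).integrableOn, integral_const_mul]
  have htotal : (∫ t in Iic w, H t * φ t) + ∫ t in Ioi w, H t * φ t = 0 := by
    rw [intervalIntegral.integral_Iic_add_Ioi hHi.integrableOn hHi.integrableOn, hH0]
  have hmass := integral_Iic_add_Ioi_gaussianPDFReal_zero_one w
  have hsol : φ w * steinSolution H w = ∫ t in Iic w, H t * φ t := mul_div_cancel₀ _ hφ
  rw [hsub, hsub]
  linear_combination (1 + w ^ 2) * hsol
    - ((1 + w ^ 2) * (∫ t in Iic w, H t * φ t) + w * φ w * H w) * hmass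
    + ((1 + w ^ 2) * (∫ t in Iic w, φ t) + w * φ w) * htotal

lemma abs_deriv_mul_steinSolution_le (hH : LipschitzWith K H) (hH0 : ∫ t, H t * φ t = 0)
    (w : ℝ) : |(1 + w ^ 2) * steinSolution H w + w * H w| ≤ (K : ℝ) := by
  have hφ := gaussianPDFReal_zero_one_pos w
  have hmass := integral_Iic_add_Ioi_gaussianPDFReal_zero_one w
  have hP : 0 ≤ (1 + w ^ 2) * (∫ t in Ioi w, φ t) - w * φ w := by
    rw [← integral_Ioi_sub_sq_mul_gaussianPDFReal_zero_one]
    exact setIntegral_nonneg measurableSet_Ioi fun t _ =>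
      mul_nonneg (sq_nonneg _) (gaussianPDFReal_zero_one_pos t).le
  have hQ : 0 ≤ (1 + w ^ 2) * (∫ t in Iic w, φ t) + w * φ w := by
    rw [← integral_Iic_sub_sq_mul_gaussianPDFReal_zero_one]
    exact setIntegral_nonneg measurableSet_Iic fun t _ =>
      mul_nonneg (sq_nonneg _) (gaussianPDFReal_zero_one_pos t).le
  have hbound : |φ w * ((1 + w ^ 2) * steinSolution H w + w * H w)| ≤ φ w * K := by
    rw [gaussianPDFReal_zero_one_mul_deriv_mul_steinSolution
      (integrable_mul_gaussianPDFReal_zero_one_of_lipschitzWith hH) hH0]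
    refine (abs_sub _ _).trans ?_
    rw [abs_mul, abs_mul, abs_of_nonneg hP, abs_of_nonneg hQ]
    calc _ ≤ ((1 + w ^ 2) * (∫ t in Ioi w, φ t) - w * φ w) *
            (K * (w * (∫ t in Iic w, φ t) + φ w))
          + ((1 + w ^ 2) * (∫ t in Iic w, φ t) + w * φ w) *
            (K * (φ w - w * ∫ t in Ioi w, φ t)) :=
          add_le_add (mul_le_mul_of_nonneg_left
            (abs_integral_Iic_sub_mul_gaussianPDFReal_zero_one_le hH w) hP)
            (mul_le_mul_of_nonneg_left
            (abs_integral_Ioi_sub_mul_gaussianPDFReal_zero_one_le hH w) hQ)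
      _ = φ w * K := by linear_combination (K * φ w) * hmass
  rw [abs_mul, abs_of_pos hφ] at hbound
  exact le_of_mul_le_mul_left hbound hφ

lemma lipschitzWith_mul_steinSolution (hH : LipschitzWith K H) (hH0 : ∫ t, H t * φ t = 0) :
    LipschitzWith K fun w => w * steinSolution H w := by
  have hderiv := hasDerivAt_mul_steinSolution hH.continuous
    (integrable_mul_gaussianPDFReal_zero_one_of_lipschitzWith hH)
  refine lipschitzWith_of_nnnorm_deriv_le (fun w => (hderiv w).differentiableAt) fun w => ?_
  rw [(hderiv w).deriv, ← NNReal.coe_le_coe, coe_nnnorm, Real.norm_eq_abs]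
  exact abs_deriv_mul_steinSolution_le hH hH0 w

lemma lipschitzWith_deriv_steinSolution (hH : LipschitzWith K H) (hH0 : ∫ t, H t * φ t = 0) :
    LipschitzWith (2 * K) fun w => w * steinSolution H w + H w := by
  rw [two_mul]
  exact (lipschitzWith_mul_steinSolution hH hH0).add hH

end Stein

lemma integral_sub_integral_gaussianReal_mul_gaussianPDFReal_zero_one {h : ℝ → ℝ}
    (hh : Integrable fun t => h t * φ t) :
    ∫ t, (h t - ∫ z, h z ∂gaussianReal 0 1) * φ t = 0 := by
  simp_rw [integral_gaussianReal_eq_integral_smul one_ne_zero, smul_eq_mul, sub_mul]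
  rw [integral_sub hh (integrable_gaussianPDFReal_zero_one.const_mul _), integral_const_mul,
    integral_gaussianPDFReal_eq_one 0 one_ne_zero, mul_one]
  simp_rw [mul_comm, sub_self]

def IsZeroBiasTransform {Ω : Type*} [MeasurableSpace Ω] (P : Measure Ω) (W Wstar : Ω → ℝ) :
    Prop :=
  ∀ f f' : ℝ → ℝ, Measurable f' → (∀ a b : ℝ, f b - f a = ∫ t in a..b, f' t) →
    Integrable (fun ω => W ω * f (W ω)) P → Integrable (fun ω => f' (Wstar ω)) P →
    ∫ ω, W ω * f (W ω) ∂P = ∫ ω, f' (Wstar ω) ∂P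

lemma IsZeroBiasTransform.abs_integral_sub_le {Ω : Type*} [MeasurableSpace Ω] {P : Measure Ω}
    [IsFiniteMeasure P] {W Wstar : Ω → ℝ} (hzb : IsZeroBiasTransform P W Wstar)
    (hW : Integrable W P) (hWs : Integrable Wstar P) {f g : ℝ → ℝ} {K L : ℝ≥0}
    (hf : ∀ x, HasDerivAt f (g x) x) (hwf : LipschitzWith K fun x => x * f x)
    (hg : LipschitzWith L g) :
    |∫ ω, (g (W ω) - W ω * f (W ω)) ∂P| ≤ L * ∫ ω, |Wstar ω - W ω| ∂P := by
  have hgW := hg.integrable_comp hW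
  have hgWs := hg.integrable_comp hWs
  have hWf := hwf.integrable_comp hW
  have hzb_fg : ∫ ω, W ω * f (W ω) ∂P = ∫ ω, g (Wstar ω) ∂P :=
    hzb f g hg.continuous.measurable (fun a b => (intervalIntegral.integral_eq_sub_of_hasDerivAt
      (fun x _ => hf x) (hg.continuous.intervalIntegrable a b)).symm) hWf hgWs
  calc |∫ ω, (g (W ω) - W ω * f (W ω)) ∂P| = |∫ ω, (g (W ω) - g (Wstar ω)) ∂P| := by
        rw [integral_sub hgW hWf, hzb_fg, integral_sub hgW hgWs]
    _ ≤ ∫ ω, |g (W ω) - g (Wstar ω)| ∂P := abs_integral_le_integral_abs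
    _ ≤ ∫ ω, L * |Wstar ω - W ω| ∂P := by
        refine integral_mono (hgW.sub hgWs).abs ((hWs.sub hW).abs.const_mul L) fun ω => ?_
        simpa [Real.dist_eq, abs_sub_comm] using hg.dist_le_mul (W ω) (Wstar ω)
    _ = L * ∫ ω, |Wstar ω - W ω| ∂P := integral_const_mul _ _

theorem zero_bias_wasserstein_bound_general
    {Ω : Type*} [MeasureSpace Ω] [IsProbabilityMeasure (ℙ : Measure Ω)]
    (W Wstar : Ω → ℝ) (hWmeas : Measurable W)
    (hL2 : Integrable (fun ω => (W ω) ^ 2) ℙ)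
    (hWsint : Integrable Wstar ℙ)
    (hzb : ∀ f f' : ℝ → ℝ, Measurable f' →
      (∀ a b : ℝ, f b - f a = ∫ t in a..b, f' t) →
      Integrable (fun ω => W ω * f (W ω)) ℙ →
      Integrable (fun ω => f' (Wstar ω)) ℙ →
      ∫ ω, W ω * f (W ω) ∂ℙ = ∫ ω, f' (Wstar ω) ∂ℙ) :
    sSup {d : ℝ | ∃ h : ℝ → ℝ, LipschitzWith 1 h ∧
        d = |(∫ ω, h (W ω) ∂ℙ) - ∫ z, h z ∂(gaussianReal 0 1)|} ≤
      2 * ∫ ω, |Wstar ω - W ω| ∂ℙ := by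
  have hW : Integrable W ℙ :=
    ((memLp_two_iff_integrable_sq hWmeas.aestronglyMeasurable).2 hL2).integrable one_le_two
  refine Real.sSup_le ?_ (by positivity)
  rintro _ ⟨h, hh, rfl⟩
  set H := fun t => h t - ∫ z, h z ∂gaussianReal 0 1
  have hH : LipschitzWith 1 H :=
    LipschitzWith.of_dist_le_mul fun a b => by simpa [H, Real.dist_eq] using hh.dist_le_mul a b
  have hH0 : ∫ t, H t * φ t = 0 := integral_sub_integral_gaussianReal_mul_gaussianPDFReal_zero_one
    (integrable_mul_gaussianPDFReal_zero_one_of_lipschitzWith hh)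
  calc |(∫ ω, h (W ω) ∂ℙ) - ∫ z, h z ∂gaussianReal 0 1|
      = |∫ ω, ((W ω * steinSolution H (W ω) + H (W ω)) - W ω * steinSolution H (W ω)) ∂ℙ| := by
        simp only [add_sub_cancel_left, H]
        rw [integral_sub (hh.integrable_comp hW) (integrable_const _), integral_const,
          probReal_univ, one_smul]
    _ ≤ ((2 * 1 : ℝ≥0) : ℝ) * ∫ ω, |Wstar ω - W ω| ∂ℙ :=
        IsZeroBiasTransform.abs_integral_sub_le hzb hW hWsint
          (hasDerivAt_steinSolution hH.continuous
            (integrable_mul_gaussianPDFReal_zero_one_of_lipschitzWith hH))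
          (lipschitzWith_mul_steinSolution hH hH0) (lipschitzWith_deriv_steinSolution hH hH0)
    _ = 2 * ∫ ω, |Wstar ω - W ω| ∂ℙ := by norm_num

/-- Zero-bias Wasserstein bound: if `W` has mean 0 and variance 1 and `W*` is a
zero-bias transform of `W` on the same probability space, then
`d_W(W, Z) ≤ 2 E|W* - W|`, where `Z` is standard normal and `d_W` is the Wasserstein
distance (sup over 1-Lipschitz test functions). -/
theorem zero_bias_wasserstein_bound
    {Ω : Type*} [MeasureSpace Ω] [IsProbabilityMeasure (ℙ : Measure Ω)]
    (W Wstar : Ω → ℝ) (hWmeas : Measurable W) (hWsmeas : Measurable Wstar)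
    (hmean : ∫ ω, W ω ∂ℙ = 0)
    (hvar : ∫ ω, (W ω) ^ 2 ∂ℙ = 1)
    (hL2 : Integrable (fun ω => (W ω) ^ 2) ℙ)
    (hWsint : Integrable Wstar ℙ)
    (hzb : ∀ f f' : ℝ → ℝ, Measurable f' →
      (∀ a b : ℝ, f b - f a = ∫ t in a..b, f' t) →
      Integrable (fun ω => W ω * f (W ω)) ℙ →
      Integrable (fun ω => f' (Wstar ω)) ℙ →
      ∫ ω, W ω * f (W ω) ∂ℙ = ∫ ω, f' (Wstar ω) ∂ℙ) :
    sSup {d : ℝ | ∃ h : ℝ → ℝ, LipschitzWith 1 h ∧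
        d = |(∫ ω, h (W ω) ∂ℙ) - ∫ z, h z ∂(gaussianReal 0 1)|} ≤
      2 * ∫ ω, |Wstar ω - W ω| ∂ℙ :=
  zero_bias_wasserstein_bound_general W Wstar hWmeas hL2 hWsint hzb
end

section
/- Let X₁,…,Xₙ be i.i.d. with E X₁ = 0, Var(X₁) = 1/n, E|X₁|³ < ∞, and W_{n-1} = Σ_{i=1}^{n-1} Xᵢ. Then for all a < b, P(a ≤ W_{n-1} ≤ b) ≤ (b - a) + 2n E|X₁|³. -/
/-!
Stein's smoothing argument. Put `V = X₀ + ⋯ + X_{n-1}` and let `f` be the function with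
`f' = 1` on `[a - δ, b + δ]`, `f' = 0` outside, and `f ((a + b) / 2) = 0`, so that
`|f| ≤ (b - a) / 2 + δ`. From above, `E[V f(V)] ≤ ((b - a) / 2 + δ) E|V| ≤ (b - a) / 2 + δ`
because `E V² = 1`. From below, write `V = Vⱼ + Xⱼ` with `Vⱼ` independent of `Xⱼ`; as
`E Xⱼ = 0`, `E[Xⱼ f(V)] = E[Xⱼ (f(Vⱼ + Xⱼ) - f(Vⱼ))] ≥ P(a ≤ Vⱼ ≤ b) E[|Xⱼ| min(|Xⱼ|, δ)]`,
and `Vⱼ` has the law of `W`. Since `|x| min(|x|, δ) ≥ x² - |x|³ / (4δ)`, summing over `j` gives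
`P(a ≤ W ≤ b) (1 - nβ / (4δ)) ≤ (b - a) / 2 + δ` with `β = E|X₀|³`, and `δ = nβ` concludes.
-/

open MeasureTheory ProbabilityTheory

noncomputable def concentrationFn (a b δ w : ℝ) : ℝ := max (a - δ) (min w (b + δ)) - (a + b) / 2

variable {a b δ : ℝ}

lemma continuous_concentrationFn : Continuous (concentrationFn a b δ) := by
  unfold concentrationFn; fun_prop

lemma concentrationFn_monotone : Monotone (concentrationFn a b δ) :=
  fun _ _ h => sub_le_sub_right (max_le_max le_rfl (min_le_min h le_rfl)) _

lemma concentrationFn_of_mem {v : ℝ} (hv : v ∈ Set.Icc (a - δ) (b + δ)) :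
    concentrationFn a b δ v = v - (a + b) / 2 := by
  rw [concentrationFn, min_eq_left hv.2, max_eq_right hv.1]

lemma abs_concentrationFn_le (hδ : 0 ≤ δ) (w : ℝ) :
    |concentrationFn a b δ w| ≤ |b - a| / 2 + δ := by
  have := le_abs_self (b - a)
  have := neg_abs_le (b - a)
  rw [concentrationFn, abs_le]
  refine ⟨by linarith [le_max_left (a - δ) (min w (b + δ))], sub_le_iff_le_add'.2 ?_⟩
  exact max_le (by linarith) ((min_le_right _ _).trans (by linarith))

lemma mul_concentrationFn_add_sub_nonneg (w x : ℝ) :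
    0 ≤ x * (concentrationFn a b δ (w + x) - concentrationFn a b δ w) := by
  rcases le_total 0 x with hx | hx
  · exact mul_nonneg hx (sub_nonneg.2 (concentrationFn_monotone (by linarith)))
  · exact mul_nonneg_of_nonpos_of_nonpos hx
      (sub_nonpos.2 (concentrationFn_monotone (by linarith)))

lemma abs_mul_min_le_mul_concentrationFn_add_sub (hδ : 0 ≤ δ) {w : ℝ} (hw : w ∈ Set.Icc a b)
    (x : ℝ) :
    |x| * min |x| δ ≤ x * (concentrationFn a b δ (w + x) - concentrationFn a b δ w) := by
  have hmin := min_le_right |x| δ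
  have hmin₀ : 0 ≤ min |x| δ := le_min (abs_nonneg x) hδ
  have hw' : concentrationFn a b δ w = w - (a + b) / 2 :=
    concentrationFn_of_mem ⟨by linarith [hw.1], by linarith [hw.2]⟩
  rcases le_total 0 x with hx | hx
  · rw [abs_of_nonneg hx] at hmin hmin₀ ⊢
    have hstep : concentrationFn a b δ (w + min x δ) = w + min x δ - (a + b) / 2 :=
      concentrationFn_of_mem ⟨by linarith [hw.1], by linarith [hw.2]⟩
    have := concentrationFn_monotone (a := a) (b := b) (δ := δ)
      (by linarith [min_le_left x δ] : w + min x δ ≤ w + x)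
    nlinarith
  · rw [abs_of_nonpos hx] at hmin hmin₀ ⊢
    have hstep : concentrationFn a b δ (w - min (-x) δ) = w - min (-x) δ - (a + b) / 2 :=
      concentrationFn_of_mem ⟨by linarith [hw.1], by linarith [hw.2]⟩
    have := concentrationFn_monotone (a := a) (b := b) (δ := δ)
      (by linarith [min_le_left (-x) δ] : w + x ≤ w - min (-x) δ)
    nlinarith

lemma indicator_mul_le_mul_concentrationFn_add_sub (hδ : 0 ≤ δ) (w x : ℝ) :
    (Set.Icc a b).indicator 1 w * (|x| * min |x| δ) ≤
      x * (concentrationFn a b δ (w + x) - concentrationFn a b δ w) := by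
  by_cases hw : w ∈ Set.Icc a b
  · simpa [hw] using abs_mul_min_le_mul_concentrationFn_add_sub hδ hw x
  · simpa [hw] using mul_concentrationFn_add_sub_nonneg w x

lemma sq_sub_div_le_abs_mul_min (hδ : 0 < δ) (x : ℝ) :
    x ^ 2 - |x| ^ 3 / (4 * δ) ≤ |x| * min |x| δ := by
  rw [← sq_abs, sub_le_iff_le_add, ← sub_le_iff_le_add', le_div_iff₀ (by positivity)]
  rcases le_total |x| δ with h | h
  · rw [min_eq_left h]; nlinarith [abs_nonneg x]
  · rw [min_eq_right h]; nlinarith [mul_nonneg (abs_nonneg x) (sq_nonneg (|x| - 2 * δ))]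

section Probability

variable {Ω : Type*} {mΩ : MeasurableSpace Ω} {μ : Measure Ω}

lemma measureReal_mul_integral_le_integral_mul_concentrationFn
    {U Y : Ω → ℝ} (hU : Measurable U) (hY : Measurable Y) (hUY : U ⟂ᵢ[μ] Y)
    (hYint : Integrable Y μ) (hY₀ : ∫ ω, Y ω ∂μ = 0) (hδ : 0 ≤ δ) :
    μ.real (U ⁻¹' Set.Icc a b) * ∫ ω, |Y ω| * min |Y ω| δ ∂μ ≤
      ∫ ω, Y ω * concentrationFn a b δ (U ω + Y ω) ∂μ := by
  set f := concentrationFn a b δ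
  have hf : Measurable f := continuous_concentrationFn.measurable
  have hfU : AEStronglyMeasurable (fun ω => f (U ω)) μ := (hf.comp hU).aestronglyMeasurable
  have hfUY : AEStronglyMeasurable (fun ω => f (U ω + Y ω)) μ :=
    (hf.comp (hU.add hY)).aestronglyMeasurable
  have hbdd : ∀ v, ‖f v‖ ≤ |b - a| / 2 + δ := abs_concentrationFn_le hδ
  have hgY : Integrable (fun ω => |Y ω| * min |Y ω| δ) μ := by
    refine (hYint.abs.mul_const δ).mono' (by fun_prop) (ae_of_all _ fun ω => ?_)
    rw [Real.norm_of_nonneg (by positivity)]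
    exact mul_le_mul_of_nonneg_left (min_le_right _ _) (abs_nonneg _)
  have hYfU := hYint.mul_bdd hfU (ae_of_all _ fun ω => hbdd (U ω))
  have hYfUY := hYint.mul_bdd hfUY (ae_of_all _ fun ω => hbdd (U ω + Y ω))
  have hcentred : ∫ ω, Y ω * f (U ω) ∂μ = 0 := by
    simpa [hY₀] using hUY.symm.integral_fun_comp_mul_comp (f := id) hY.aemeasurable
      hU.aemeasurable aestronglyMeasurable_id hf.aestronglyMeasurable
  have hind : Measurable ((Set.Icc a b).indicator (1 : ℝ → ℝ)) :=
    measurable_const.indicator measurableSet_Icc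
  have hsplit : ∫ ω, (Set.Icc a b).indicator 1 (U ω) * (|Y ω| * min |Y ω| δ) ∂μ =
      μ.real (U ⁻¹' Set.Icc a b) * ∫ ω, |Y ω| * min |Y ω| δ ∂μ := by
    rw [hUY.integral_fun_comp_mul_comp (g := fun y => |y| * min |y| δ) hU.aemeasurable
      hY.aemeasurable hind.aestronglyMeasurable (by fun_prop),
      ← map_measureReal_apply hU measurableSet_Icc, ← integral_indicator_one measurableSet_Icc,
      integral_map hU.aemeasurable hind.aestronglyMeasurable]
  calc μ.real (U ⁻¹' Set.Icc a b) * ∫ ω, |Y ω| * min |Y ω| δ ∂μ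
      = ∫ ω, (Set.Icc a b).indicator 1 (U ω) * (|Y ω| * min |Y ω| δ) ∂μ := hsplit.symm
    _ ≤ ∫ ω, Y ω * f (U ω + Y ω) - Y ω * f (U ω) ∂μ := by
      refine integral_mono ?_ (hYfUY.sub hYfU) fun ω => ?_
      · refine hgY.bdd_mul (hind.comp hU).aestronglyMeasurable (c := 1) (ae_of_all _ fun ω => ?_)
        by_cases h : U ω ∈ Set.Icc a b <;> simp [h]
      · simpa only [mul_sub] using indicator_mul_le_mul_concentrationFn_add_sub hδ (U ω) (Y ω)
    _ = ∫ ω, Y ω * f (U ω + Y ω) ∂μ := by rw [integral_sub hYfUY hYfU, hcentred, sub_zero]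

lemma integral_mul_concentrationFn_le {V : Ω → ℝ} (hV : Integrable V μ) (hδ : 0 ≤ δ) :
    ∫ ω, V ω * concentrationFn a b δ (V ω) ∂μ ≤ (|b - a| / 2 + δ) * ∫ ω, |V ω| ∂μ := by
  have hbdd := abs_concentrationFn_le (a := a) (b := b) hδ
  rw [← integral_const_mul]
  refine integral_mono (hV.mul_bdd
    (continuous_concentrationFn.comp_aestronglyMeasurable hV.aestronglyMeasurable)
    (ae_of_all _ fun ω => hbdd (V ω))) (hV.abs.const_mul _) fun ω => ?_
  calc V ω * concentrationFn a b δ (V ω) ≤ |V ω| * |concentrationFn a b δ (V ω)| := by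
        rw [← abs_mul]; exact le_abs_self _
    _ ≤ |V ω| * (|b - a| / 2 + δ) := mul_le_mul_of_nonneg_left (hbdd _) (abs_nonneg _)
    _ = (|b - a| / 2 + δ) * |V ω| := mul_comm _ _

lemma integral_abs_le_sqrt_integral_sq [IsProbabilityMeasure μ] {V : Ω → ℝ} (hV : MemLp V 2 μ) :
    ∫ ω, |V ω| ∂μ ≤ √(∫ ω, V ω ^ 2 ∂μ) := by
  have := variance_nonneg |V| μ
  rw [variance_eq_sub hV.abs] at this
  exact Real.le_sqrt_of_sq_le (by simpa [sq_abs] using this)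

lemma integral_sq_sum_of_integral_eq_zero [IsFiniteMeasure μ] {ι : Type*} {X : ι → Ω → ℝ}
    {s : Finset ι} (hX : ∀ i ∈ s, MemLp (X i) 2 μ) (hmean : ∀ i ∈ s, ∫ ω, X i ω ∂μ = 0)
    (hindep : Set.Pairwise ↑s fun i j => X i ⟂ᵢ[μ] X j) :
    ∫ ω, (∑ i ∈ s, X i ω) ^ 2 ∂μ = ∑ i ∈ s, ∫ ω, X i ω ^ 2 ∂μ := by
  have hsum_meas : AEMeasurable (∑ i ∈ s, X i) μ :=
    Finset.aemeasurable_sum _ fun i hi => (hX i hi).aemeasurable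
  have hsum_mean : ∫ ω, (∑ i ∈ s, X i) ω ∂μ = 0 := by
    simp only [Finset.sum_apply]
    rw [integral_finsetSum _ fun i hi => (hX i hi).integrable one_le_two]
    exact Finset.sum_eq_zero hmean
  have := IndepFun.variance_sum hX hindep
  rw [variance_of_integral_eq_zero hsum_meas hsum_mean] at this
  simpa [Finset.sum_apply, Finset.sum_congr rfl fun i hi =>
    variance_of_integral_eq_zero (hX i hi).aemeasurable (hmean i hi)] using this

lemma integral_abs_sum_le_one [IsProbabilityMeasure μ] {ι : Type*} {X : ι → Ω → ℝ}
    {s : Finset ι} (hX : ∀ i ∈ s, MemLp (X i) 2 μ) (hmean : ∀ i ∈ s, ∫ ω, X i ω ∂μ = 0)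
    (hindep : Set.Pairwise ↑s fun i j => X i ⟂ᵢ[μ] X j)
    (hvar : ∀ i ∈ s, ∫ ω, X i ω ^ 2 ∂μ = 1 / s.card) :
    ∫ ω, |∑ i ∈ s, X i ω| ∂μ ≤ 1 := by
  refine (integral_abs_le_sqrt_integral_sq (memLp_finsetSum s hX)).trans ?_
  rw [integral_sq_sum_of_integral_eq_zero hX hmean hindep, Finset.sum_congr rfl hvar,
    Finset.sum_const, nsmul_eq_mul, mul_one_div]
  exact Real.sqrt_le_one.2 (div_self_le_one _)

lemma integral_sq_sub_div_le_integral_abs_mul_min (hδ : 0 < δ) {Y : Ω → ℝ}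
    (hY : Measurable Y) (hY₂ : Integrable (fun ω => Y ω ^ 2) μ)
    (hY₃ : Integrable (fun ω => |Y ω| ^ 3) μ) :
    ∫ ω, Y ω ^ 2 ∂μ - (∫ ω, |Y ω| ^ 3 ∂μ) / (4 * δ) ≤ ∫ ω, |Y ω| * min |Y ω| δ ∂μ := by
  rw [← integral_div, ← integral_sub hY₂ (hY₃.div_const _)]
  refine integral_mono (hY₂.sub (hY₃.div_const _)) ?_
    fun ω => sq_sub_div_le_abs_mul_min hδ (Y ω)
  refine hY₂.mono' (by fun_prop) (ae_of_all _ fun ω => ?_)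
  rw [Real.norm_of_nonneg (by positivity), ← sq_abs, sq]
  exact mul_le_mul_of_nonneg_left (min_le_left _ _) (abs_nonneg _)

lemma memLp_two_of_integrable_abs_pow_three [IsFiniteMeasure μ] {Y : Ω → ℝ}
    (hY : AEStronglyMeasurable Y μ) (hY₃ : Integrable (fun ω => |Y ω| ^ 3) μ) : MemLp Y 2 μ :=
  (memLp_two_iff_integrable_sq_norm hY).2 <|
    integrable_norm_pow_of_le hY (p := 2) (q := 3) (by norm_num)
      (by simpa only [Real.norm_eq_abs] using hY₃)

lemma integral_abs_pow_three_pos {Y : Ω → ℝ} (hY₃ : Integrable (fun ω => |Y ω| ^ 3) μ)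
    (hY₂ : ∫ ω, Y ω ^ 2 ∂μ ≠ 0) : 0 < ∫ ω, |Y ω| ^ 3 ∂μ := by
  refine (integral_nonneg fun ω => by positivity).lt_of_ne fun h => hY₂ ?_
  have hzero := (integral_eq_zero_iff_of_nonneg (fun ω => by positivity) hY₃).1 h.symm
  refine integral_eq_zero_of_ae ?_
  filter_upwards [hzero] with ω hω
  simpa using hω

end Probability

section IID

variable {Ω ι : Type*} {mΩ : MeasurableSpace Ω} {μ : Measure Ω} [DecidableEq ι] {X : ι → Ω → ℝ}

lemma identDistrib_sum_of_card_eq (hmeas : ∀ i, Measurable (X i)) (hindep : iIndepFun X μ)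
    (hident : ∀ i j, IdentDistrib (X i) (X j) μ μ) {s t : Finset ι} (hst : s.card = t.card) :
    IdentDistrib (∑ i ∈ s, X i) (∑ i ∈ t, X i) μ μ := by
  have := hindep.isProbabilityMeasure
  induction s using Finset.induction_on generalizing t with
  | empty =>
    rw [Finset.card_eq_zero.1 hst.symm]
    exact IdentDistrib.refl aemeasurable_const
  | insert j s hj ih =>
    rw [Finset.card_insert_of_notMem hj] at hst
    obtain ⟨l, hl⟩ := Finset.card_pos.1 (by omega : 0 < t.card)
    have hcard : s.card = (t.erase l).card := by rw [Finset.card_erase_of_mem hl, ← hst]; rfl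
    have hpair := (ih hcard).prodMk (hident j l)
      (hindep.indepFun_finsetSum_of_notMem hmeas hj)
      (hindep.indepFun_finsetSum_of_notMem hmeas (Finset.notMem_erase l t))
    rw [Finset.sum_insert hj, ← Finset.add_sum_erase t X hl, add_comm (X j), add_comm (X l)]
    exact hpair.comp measurable_add

lemma card_mul_le_integral_sum_mul_concentrationFn (hmeas : ∀ i, Measurable (X i))
    (hindep : iIndepFun X μ) (hident : ∀ i j, IdentDistrib (X i) (X j) μ μ)
    (hint : ∀ i, Integrable (X i) μ) (hmean : ∀ i, ∫ ω, X i ω ∂μ = 0) (hδ : 0 ≤ δ)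
    {s t : Finset ι} (hst : t.card + 1 = s.card) (k : ι) :
    s.card * (μ.real ((fun ω => ∑ i ∈ t, X i ω) ⁻¹' Set.Icc a b) *
        ∫ ω, |X k ω| * min |X k ω| δ ∂μ) ≤
      ∫ ω, (∑ i ∈ s, X i ω) * concentrationFn a b δ (∑ i ∈ s, X i ω) ∂μ := by
  set p := μ.real ((fun ω => ∑ i ∈ t, X i ω) ⁻¹' Set.Icc a b)
  have hterm : ∀ j ∈ s, p * ∫ ω, |X k ω| * min |X k ω| δ ∂μ ≤
      ∫ ω, X j ω * concentrationFn a b δ (∑ i ∈ s, X i ω) ∂μ := by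
    intro j hj
    have hlaw := identDistrib_sum_of_card_eq hmeas hindep hident (s := s.erase j) (t := t)
      (by rw [Finset.card_erase_of_mem hj]; omega)
    have hprob : μ.real ((∑ i ∈ s.erase j, X i) ⁻¹' Set.Icc a b) = p := by
      rw [measureReal_def, hlaw.measure_mem_eq measurableSet_Icc, Finset.sum_fn]; rfl
    have hkernel : ∫ ω, |X j ω| * min |X j ω| δ ∂μ = ∫ ω, |X k ω| * min |X k ω| δ ∂μ :=
      ((hident j k).comp (by fun_prop : Measurable fun y : ℝ => |y| * min |y| δ)).integral_eq
    have := measureReal_mul_integral_le_integral_mul_concentrationFn (a := a) (b := b)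
      (by fun_prop) (hmeas j)
      (hindep.indepFun_finsetSum_of_notMem hmeas (Finset.notMem_erase j s)) (hint j) (hmean j) hδ
    rw [hprob, hkernel] at this
    simpa only [Finset.sum_apply, Finset.sum_erase_add _ _ hj] using this
  calc (s.card : ℝ) * (p * ∫ ω, |X k ω| * min |X k ω| δ ∂μ)
      = ∑ j ∈ s, p * ∫ ω, |X k ω| * min |X k ω| δ ∂μ := by rw [Finset.sum_const, nsmul_eq_mul]
    _ ≤ ∑ j ∈ s, ∫ ω, X j ω * concentrationFn a b δ (∑ i ∈ s, X i ω) ∂μ :=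
      Finset.sum_le_sum hterm
    _ = ∫ ω, (∑ i ∈ s, X i ω) * concentrationFn a b δ (∑ i ∈ s, X i ω) ∂μ := by
      simp_rw [Finset.sum_mul]
      refine (integral_finsetSum _ fun j _ => (hint j).mul_bdd ?_
        (ae_of_all _ fun ω => abs_concentrationFn_le hδ _)).symm
      exact (continuous_concentrationFn.measurable.comp (by fun_prop)).aestronglyMeasurable

lemma measureReal_preimage_Icc_mul_le (hmeas : ∀ i, Measurable (X i))
    (hindep : iIndepFun X μ) (hident : ∀ i j, IdentDistrib (X i) (X j) μ μ)
    (hX : ∀ i, MemLp (X i) 2 μ) (hmean : ∀ i, ∫ ω, X i ω ∂μ = 0) (hδ : 0 < δ)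
    {s t : Finset ι} (hst : t.card + 1 = s.card) {k : ι}
    (hk : Integrable (fun ω => |X k ω| ^ 3) μ) :
    μ.real ((fun ω => ∑ i ∈ t, X i ω) ⁻¹' Set.Icc a b) *
        (s.card * (∫ ω, X k ω ^ 2 ∂μ - (∫ ω, |X k ω| ^ 3 ∂μ) / (4 * δ))) ≤
      (|b - a| / 2 + δ) * ∫ ω, |∑ i ∈ s, X i ω| ∂μ := by
  have := hindep.isProbabilityMeasure
  have hlow := card_mul_le_integral_sum_mul_concentrationFn (a := a) (b := b) hmeas hindep
    hident (fun i => (hX i).integrable one_le_two) hmean hδ.le hst k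
  have hup := integral_mul_concentrationFn_le (a := a) (b := b)
    ((memLp_finsetSum s fun i _ => hX i).integrable one_le_two) hδ.le
  have hkernel_ge :=
    integral_sq_sub_div_le_integral_abs_mul_min hδ (hmeas k) (hX k).integrable_sq hk
  calc _ ≤ s.card * (μ.real ((fun ω => ∑ i ∈ t, X i ω) ⁻¹' Set.Icc a b) *
        ∫ ω, |X k ω| * min |X k ω| δ ∂μ) := by
        rw [mul_left_comm]; gcongr
    _ ≤ _ := hlow.trans hup

end IID

/-- Stein's concentration inequality: for i.i.d. `X₁, …, Xₙ` with mean 0 and variance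
`1/n`, and `W_{n-1} = X₁ + ⋯ + X_{n-1}`, one has
`P(a ≤ W_{n-1} ≤ b) ≤ (b - a) + 2n E|X₁|³` for all `a < b`. -/
theorem stein_concentration_inequality
    {Ω : Type*} [MeasureSpace Ω] [IsProbabilityMeasure (ℙ : Measure Ω)]
    (n : ℕ) (hn : 0 < n)
    (X : ℕ → Ω → ℝ) (hmeas : ∀ i, Measurable (X i))
    (hindep : iIndepFun X ℙ)
    (hident : ∀ i, Measure.map (X i) ℙ = Measure.map (X 0) ℙ)
    (hmean : ∫ ω, X 0 ω ∂ℙ = 0)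
    (hvar : ∫ ω, (X 0 ω) ^ 2 ∂ℙ = 1 / n)
    (hL3 : Integrable (fun ω => |X 0 ω| ^ 3) ℙ)
    (W : Ω → ℝ) (hW : W = fun ω => ∑ i ∈ Finset.range (n - 1), X i ω) :
    ∀ a b : ℝ, a < b →
      (ℙ {ω | a ≤ W ω ∧ W ω ≤ b}).toReal ≤
        (b - a) + 2 * n * ∫ ω, |X 0 ω| ^ 3 ∂ℙ := by
  intro a b hab
  subst hW
  have hid : ∀ i j, IdentDistrib (X i) (X j) ℙ ℙ := fun i j =>
    ⟨(hmeas i).aemeasurable, (hmeas j).aemeasurable, by rw [hident i, hident j]⟩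
  have hL2 : ∀ i, MemLp (X i) 2 ℙ := fun i => (hid i 0).memLp_iff.2 <|
    memLp_two_of_integrable_abs_pow_three (hmeas 0).aestronglyMeasurable hL3
  have hmean' : ∀ i, ∫ ω, X i ω ∂ℙ = 0 := fun i => (hid i 0).integral_eq.trans hmean
  have hV : ∫ ω, |∑ i ∈ Finset.range n, X i ω| ∂ℙ ≤ 1 :=
    integral_abs_sum_le_one (fun i _ => hL2 i) (fun i _ => hmean' i)
      (fun i _ j _ hij => hindep.indepFun hij) fun i _ => by
        rw [Finset.card_range, ← hvar]
        exact ((hid i 0).comp (measurable_id.pow_const 2)).integral_eq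
  set β := ∫ ω, |X 0 ω| ^ 3 ∂ℙ
  have hβ : 0 < β := integral_abs_pow_three_pos hL3 (by rw [hvar]; positivity)
  have key := measureReal_preimage_Icc_mul_le (a := a) (b := b) (δ := n * β) hmeas hindep hid
    hL2 hmean' (by positivity) (s := Finset.range n) (t := Finset.range (n - 1))
    (by simp only [Finset.card_range]; omega) hL3
  have hn' : (0 : ℝ) < n := by exact_mod_cast hn
  have h34 : (n : ℝ) * (1 / n - β / (4 * (n * β))) = 3 / 4 := by field_simp; ring
  rw [Finset.card_range, hvar, h34, abs_of_pos (sub_pos.2 hab)] at key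
  change Measure.real ℙ ((fun ω => ∑ i ∈ Finset.range (n - 1), X i ω) ⁻¹' Set.Icc a b) ≤ _
  nlinarith [mul_le_of_le_one_right (by positivity : 0 ≤ (b - a) / 2 + n * β) hV]
end
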